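/- arXiv:2602.03746 — 3 statements merged into one kernel-verified Lean document; each statement's English description precedes it below -/
import Mathlib

section
/- Let A be a finite alphabet with at least 2 letters, let (c_n)_{n≥0} be a directive sequence over A (every letter of A occurs infinitely often in (c_n)) which, for some C ∈ ℕ, contains no C+1 consecutive equal letters (bounded weak partial coefficients), let a ∈ A, and let x = lim_{n→∞} σ_{c_0} ∘ σ_{c_1} ∘ ⋯ ∘ σ_{c_n}(a) be the associated Arnoux–Rauzy word. Then there exists an integer P ≥ 1 such that x is P-power-free. -/
open scoped Classical

section Core

variable {A : Type*} {B : Type*}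

/-- `w` occurs at position `i` of the infinite word `x`. -/
def OccursAt (x : ℕ → A) (w : List A) (i : ℕ) : Prop :=
  w = (List.range w.length).map fun j => x (i + j)

/-- `w` is a factor of the infinite word `x`. -/
def IsFactor (x : ℕ → A) (w : List A) : Prop := ∃ i, OccursAt x w i

/-- The number of (possibly overlapping) occurrences of `w` in the finite word `u`,
i.e. `|u|_w`. -/
noncomputable def countOccs (u w : List A) : ℕ :=
  ((Finset.range (u.length + 1)).filter fun i => w <+: u.drop i).card

/-- The finite word `w` is `C`-balanced in the infinite word `x`. -/
def BalancedIn (C : ℝ) (w : List A) (x : ℕ → A) : Prop :=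
  ∀ u v : List A, IsFactor x u → IsFactor x v → u.length = v.length →
    |(countOccs u w : ℝ) - (countOccs v w : ℝ)| ≤ C

/-- Every finite word is `C_w`-balanced in `x` for some constant `C_w > 0`. -/
def FactorBalanced (x : ℕ → A) : Prop :=
  ∀ w : List A, ∃ C : ℝ, 0 < C ∧ BalancedIn C w x

/-- There is a single constant `C > 0` such that every finite word is `C`-balanced in `x`. -/
def UniformlyFactorBalanced (x : ℕ → A) : Prop :=
  ∃ C : ℝ, 0 < C ∧ ∀ w : List A, BalancedIn C w x

/-- Every letter is `C`-balanced in `x`. -/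
def LetterBalanced (C : ℝ) (x : ℕ → A) : Prop :=
  ∀ a : A, BalancedIn C [a] x

/-- `x` is `P`-power-free: no factor of `x` is a `P`-th power of a nonempty word. -/
def PowerFree (P : ℕ) (x : ℕ → A) : Prop :=
  ∀ v : List A, v ≠ [] → ¬ IsFactor x (List.flatten (List.replicate P v))

/-- The length-`n` prefix of the infinite word `x`. -/
def wordPrefix (x : ℕ → A) (n : ℕ) : List A := (List.range n).map x

/-- The extension of a substitution to finite words. -/
def substWord (τ : A → List B) (w : List A) : List B := (w.map τ).flatten

/-- The word `w` has (prefix) frequency `μ` in `x`. -/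
def HasFreq (x : ℕ → A) (w : List A) (μ : ℝ) : Prop :=
  Filter.Tendsto (fun n => (countOccs (wordPrefix x n) w : ℝ) / n)
    Filter.atTop (nhds μ)

/-- `τ` is `k`-decisive in `x` with witness map `r` (each `r a` of length `k ≥ 1`,
and `τ b` starts with `r a` whenever `ab` is a factor of `x`). -/
def DecisiveWith (τ : A → List B) (x : ℕ → A) (r : A → List B) (k : ℕ) : Prop :=
  1 ≤ k ∧ (∀ a, (r a).length = k) ∧
    ∀ a b : A, IsFactor x [a, b] → r a <+: τ b

/-- `τ` is `k`-decisive in `x`. -/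
def Decisive (τ : A → List B) (x : ℕ → A) (k : ℕ) : Prop :=
  ∃ r : A → List B, DecisiveWith τ x r k

/-- The image of the infinite word `x` under the substitution `τ`: when the images of
prefixes of `x` have unbounded length, `substInf τ x` is the infinite word `τ(x)`. -/
noncomputable def substInf [Nonempty B] (τ : A → List B) (x : ℕ → A) (j : ℕ) : B :=
  if h : ∃ n, j < (substWord τ (wordPrefix x n)).length
  then (substWord τ (wordPrefix x (Nat.find h))).get ⟨j, Nat.find_spec h⟩
  else Classical.arbitrary B

/-- Iterates of a substitution: `substIter τ n a = τ^n(a)` as a finite word. -/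
def substIter (τ : A → List A) : ℕ → A → List A
  | 0, a => [a]
  | n+1, a => substWord (substIter τ n) (τ a)

/-- `τ` is prolongable on the letter `a`. -/
def Prolongable (τ : A → List A) (a : A) : Prop :=
  (τ a).head? = some a ∧ (∀ b, τ b ≠ []) ∧
    Filter.Tendsto (fun n => (substIter τ n a).length) Filter.atTop Filter.atTop

/-- The fixed point `τ^ω(a)` of a substitution prolongable on `a`:
the limit of the prefix chain `τ^n(a)`. -/
noncomputable def fixedPoint (τ : A → List A) (a : A) (j : ℕ) : A :=
  if h : ∃ n, j < (substIter τ n a).length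
  then (substIter τ (Nat.find h) a).get ⟨j, Nat.find_spec h⟩
  else a

/-- The factor complexity of `x`: the number of distinct length-`n` factors. -/
noncomputable def complexity (x : ℕ → A) (n : ℕ) : ℕ :=
  Set.ncard {w : List A | w.length = n ∧ IsFactor x w}

/-- Every factor of `x` occurs infinitely often in `x`. -/
def Recurrent (x : ℕ → A) : Prop :=
  ∀ w : List A, IsFactor x w → ∀ N : ℕ, ∃ i, N ≤ i ∧ OccursAt x w i

/-- For every factor `w` of `x` there is `k` such that `w` occurs in
every length-`k` factor of `x`. -/
def UniformlyRecurrent (x : ℕ → A) : Prop :=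
  ∀ w : List A, IsFactor x w → ∃ k : ℕ, ∀ v : List A, IsFactor x v →
    v.length = k → 1 ≤ countOccs v w

end Core

section ArnouxRauzy

variable {A : Type*}

/-- The Arnoux–Rauzy substitution `σ_a`: it maps `a` to `a` and any `b ≠ a` to `ba`. -/
def arSubst [DecidableEq A] (a b : A) : List A := if b = a then [a] else [b, a]

/-- `arIter c n = σ_{c 0} ∘ σ_{c 1} ∘ ⋯ ∘ σ_{c (n-1)}` (identity for `n = 0`). -/
def arIter [DecidableEq A] (c : ℕ → A) : ℕ → A → List A
  | 0, b => [b]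
  | n+1, b => substWord (arIter c n) (arSubst (c n) b)

/-- The Arnoux–Rauzy word associated with the directive sequence `c` and letter `a`:
the limit of the prefix chain `σ_{c 0} ∘ ⋯ ∘ σ_{c n}(a)`. -/
noncomputable def arLimit [DecidableEq A] (c : ℕ → A) (a : A) (j : ℕ) : A :=
  if h : ∃ n, j < (arIter c n a).length
  then (arIter c (Nat.find h) a).get ⟨j, Nat.find_spec h⟩
  else a

end ArnouxRauzy

set_option linter.unusedSectionVars false
namespace ARPF

variable {A : Type*} {B : Type*} {C' : Type*}

theorem substWord_nil (τ : A → List B) : substWord τ [] = [] := rfl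

theorem substWord_cons (τ : A → List B) (b : A) (w : List A) :
    substWord τ (b :: w) = τ b ++ substWord τ w := by
  simp [substWord]

theorem substWord_append (τ : A → List B) (u v : List A) :
    substWord τ (u ++ v) = substWord τ u ++ substWord τ v := by
  simp [substWord]

theorem substWord_pure (w : List A) : substWord (fun b => [b]) w = w := by
  induction w with
  | nil => rfl
  | cons b w ih => rw [substWord_cons, ih]; rfl

theorem substWord_comp (τ : B → List C') (ρ : A → List B) (w : List A) :
    substWord τ (substWord ρ w) = substWord (fun d => substWord τ (ρ d)) w := by
  induction w with
  | nil => rfl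
  | cons b w ih => rw [substWord_cons, substWord_append, ih, substWord_cons]

theorem IsPrefix.substWord (τ : A → List B) {u v : List A} (h : u <+: v) :
    substWord τ u <+: substWord τ v := by
  obtain ⟨t, rfl⟩ := h
  rw [substWord_append]
  exact ⟨_, rfl⟩

end ARPF

namespace ARPF

set_option linter.unusedSectionVars false

variable {A : Type*} [DecidableEq A]

/-- shifted directive sequence -/
def shf (c : ℕ → A) : ℕ → A := fun n => c (n + 1)

def shfK (t : ℕ) (c : ℕ → A) : ℕ → A := fun n => c (n + t)

theorem shfK_zero (c : ℕ → A) : shfK 0 c = c := rfl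

theorem shfK_shf (t : ℕ) (c : ℕ → A) : shfK t (shf c) = shfK (t + 1) c := by
  funext n; simp [shfK, shf]; ring_nf

theorem arSubst_self (a : A) : arSubst a a = [a] := by simp [arSubst]

theorem arSubst_ne (a b : A) (h : b ≠ a) : arSubst a b = [b, a] := by simp [arSubst, h]

theorem arSubst_cons (a b : A) : ∃ d t, arSubst a b = d :: t ∧ d = b := by
  unfold arSubst; split
  next h => exact ⟨_, _, rfl, h.symm⟩
  next h => exact ⟨_, _, rfl, rfl⟩

theorem arIter_zero (c : ℕ → A) (b : A) : arIter c 0 b = [b] := rfl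

theorem arIter_succ (c : ℕ → A) (n : ℕ) (b : A) :
    arIter c (n + 1) b = substWord (arIter c n) (arSubst (c n) b) := rfl

theorem arIter_length_pos (c : ℕ → A) (n : ℕ) (b : A) : 1 ≤ (arIter c n b).length := by
  induction n generalizing b with
  | zero => simp [arIter_zero]
  | succ n ih =>
    rw [arIter_succ]
    obtain ⟨d, t, he, -⟩ := arSubst_cons (c n) b
    rw [he, substWord_cons, List.length_append]
    have := ih d; omega

theorem arIter_shift (c : ℕ → A) (n : ℕ) (b : A) :
    arIter c (n + 1) b = substWord (arSubst (c 0)) (arIter (shf c) n b) := by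
  induction n generalizing b with
  | zero =>
    show substWord (arIter c 0) (arSubst (c 0) b) = substWord (arSubst (c 0)) (arIter (shf c) 0 b)
    have h1 : (arIter c 0 : A → List A) = fun d => [d] := rfl
    rw [h1, substWord_pure, arIter_zero]
    simp [substWord]
  | succ n ih =>
    rw [arIter_succ]
    have hfun : (arIter c (n + 1) : A → List A)
        = fun d => substWord (arSubst (c 0)) (arIter (shf c) n d) := by
      funext d; exact ih d
    rw [hfun]
    rw [show c (n + 1) = (shf c) n from rfl]
    rw [← substWord_comp, ← arIter_succ]

theorem arIter_prefix (c : ℕ → A) (n : ℕ) (a : A) :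
    arIter c n a <+: arIter c (n + 1) a := by
  rw [arIter_succ]
  by_cases h : a = c n
  · rw [← h, arSubst_self]
    have : substWord (arIter c n) [a] = arIter c n a ++ [] := by simp [substWord]
    rw [this]; exact ⟨[], rfl⟩
  · rw [arSubst_ne _ _ h]
    have : substWord (arIter c n) [a, c n] = arIter c n a ++ (arIter c n (c n) ++ []) := by
      simp [substWord]
    rw [this]; exact ⟨_, rfl⟩

theorem arIter_prefix_le (c : ℕ → A) {n m : ℕ} (h : n ≤ m) (a : A) :
    arIter c n a <+: arIter c m a := by
  induction m with
  | zero => simp_all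
  | succ m ih =>
    rcases Nat.lt_or_ge n (m + 1) with h' | h'
    · exact (ih (by omega)).trans (arIter_prefix c m a)
    · have : n = m + 1 := by omega
      subst this; exact List.prefix_refl _

end ARPF

namespace ARPF

variable {A : Type*} [DecidableEq A]

theorem arLimit_eq_get (c : ℕ → A) (a : A) {j n : ℕ} (h : j < (arIter c n a).length) :
    arLimit c a j = (arIter c n a)[j] := by
  have hex : ∃ m, j < (arIter c m a).length := ⟨n, h⟩
  unfold arLimit
  rw [dif_pos hex]
  have hfind : Nat.find hex ≤ n := Nat.find_min' hex h
  have hpre := arIter_prefix_le c hfind a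
  simpa using hpre.getElem (Nat.find_spec hex)

theorem wordPrefix_length (y : ℕ → A) (n : ℕ) : (wordPrefix y n).length = n := by
  simp [wordPrefix]

theorem wordPrefix_getElem (y : ℕ → A) {n j : ℕ} (h : j < n) :
    (wordPrefix y n)[j]'(by simpa [wordPrefix_length] using h) = y j := by
  simp [wordPrefix]

theorem wordPrefix_succ (y : ℕ → A) (n : ℕ) :
    wordPrefix y (n + 1) = wordPrefix y n ++ [y n] := by
  simp [wordPrefix, List.range_succ]

/-- Totality: lengths of approximants are unbounded (needs ≥ 2 letters & directive). -/
theorem arIter_unbounded [Fintype A] (hcard : 2 ≤ Fintype.card A) (c : ℕ → A)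
    (hdir : ∀ b : A, ∀ N : ℕ, ∃ n, N ≤ n ∧ c n = b) (a : A) (N : ℕ) :
    ∃ n, N < (arIter c n a).length := by
  induction N with
  | zero => exact ⟨0, by have := arIter_length_pos c 0 a; omega⟩
  | succ N ih =>
    obtain ⟨n, hn⟩ := ih
    obtain ⟨b, hb⟩ := Fintype.exists_ne_of_one_lt_card (by omega) a
    obtain ⟨n', hn'le, hn'⟩ := hdir b n
    have hmono : (arIter c n a).length ≤ (arIter c n' a).length :=
      (arIter_prefix_le c hn'le a).length_le
    have hne : a ≠ c n' := by rw [hn']; exact fun h => hb h.symm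
    have : (arIter c (n' + 1) a).length
        = (arIter c n' a).length + (arIter c n' (c n')).length := by
      rw [arIter_succ, arSubst_ne _ _ hne]
      simp [substWord]
    have hpos := arIter_length_pos c n' (c n')
    exact ⟨n' + 1, by omega⟩

variable [Fintype A]

theorem wordPrefix_eq_take (hcard : 2 ≤ Fintype.card A) (c : ℕ → A)
    (hdir : ∀ b : A, ∀ N : ℕ, ∃ n, N ≤ n ∧ c n = b) (a : A) (m : ℕ) :
    ∃ n, wordPrefix (arLimit c a) m <+: arIter c n a := by
  obtain ⟨n, hn⟩ := arIter_unbounded hcard c hdir a m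
  refine ⟨n, ?_⟩
  have : wordPrefix (arLimit c a) m = (arIter c n a).take m := by
    apply List.ext_getElem
    · rw [wordPrefix_length, List.length_take]; omega
    · intro j h1 h2
      have h1' : j < m := by rwa [wordPrefix_length] at h1
      rw [wordPrefix_getElem _ h1']
      rw [List.getElem_take]
      exact arLimit_eq_get c a (by omega)
  rw [this]
  exact List.take_prefix _ _

theorem prefix_of_approx (c : ℕ → A) (a : A) {w : List A} {n : ℕ}
    (h : w <+: arIter c n a) : w = wordPrefix (arLimit c a) w.length := by
  apply List.ext_getElem
  · rw [wordPrefix_length]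
  · intro j h1 h2
    rw [wordPrefix_getElem _ (by rwa [wordPrefix_length] at h2)]
    rw [arLimit_eq_get c a (show j < (arIter c n a).length by
      have := h.length_le; omega)]
    exact h.getElem h1

end ARPF

namespace ARPF

variable {A : Type*} [DecidableEq A] [Fintype A]

/-- Block boundary function: `bnd c a m` is the position in `arLimit c a` where the
image of the `m`-th letter of `arLimit (shf c) a` under `arSubst (c 0)` starts. -/
noncomputable def bnd (c : ℕ → A) (a : A) (m : ℕ) : ℕ :=
  (substWord (arSubst (c 0)) (wordPrefix (arLimit (shf c) a) m)).length

theorem hdir_shf {c : ℕ → A} (hdir : ∀ b : A, ∀ N : ℕ, ∃ n, N ≤ n ∧ c n = b) :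
    ∀ b : A, ∀ N : ℕ, ∃ n, N ≤ n ∧ shf c n = b := by
  intro b N
  obtain ⟨n, hn, he⟩ := hdir b (N + 1)
  exact ⟨n - 1, by omega, by unfold shf; rwa [show n - 1 + 1 = n by omega]⟩

section Block

variable (hcard : 2 ≤ Fintype.card A) (c : ℕ → A) (a : A)
  (hdir : ∀ b : A, ∀ N : ℕ, ∃ n, N ≤ n ∧ c n = b)

include hcard hdir in
theorem bnd_spec (m : ℕ) :
    wordPrefix (arLimit c a) (bnd c a m)
      = substWord (arSubst (c 0)) (wordPrefix (arLimit (shf c) a) m) := by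
  obtain ⟨n, hpre⟩ := wordPrefix_eq_take hcard (shf c) (hdir_shf hdir) a m
  have h2 : substWord (arSubst (c 0)) (wordPrefix (arLimit (shf c) a) m)
      <+: arIter c (n + 1) a := by
    rw [arIter_shift]
    exact IsPrefix.substWord _ hpre
  exact (prefix_of_approx c a h2).symm

theorem bnd_zero : bnd c a 0 = 0 := by
  simp [bnd, wordPrefix, substWord]

theorem bnd_succ (m : ℕ) :
    bnd c a (m + 1) = bnd c a m + (arSubst (c 0) (arLimit (shf c) a m)).length := by
  unfold bnd
  rw [wordPrefix_succ, substWord_append, List.length_append]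
  congr 1
  simp [substWord]

theorem arSubst_length (b e : A) : (arSubst e b).length = if b = e then 1 else 2 := by
  unfold arSubst; split <;> simp_all

include hcard hdir in
theorem block_get (m : ℕ) {j : ℕ} (hj : j < (arSubst (c 0) (arLimit (shf c) a m)).length) :
    arLimit c a (bnd c a m + j) = (arSubst (c 0) (arLimit (shf c) a m))[j] := by
  have key := bnd_spec hcard c a hdir (m + 1)
  rw [wordPrefix_succ, substWord_append] at key
  rw [← bnd_spec hcard c a hdir m] at key
  have hlt : bnd c a m + j < bnd c a (m + 1) := by
    rw [bnd_succ]; omega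
  have hL : arLimit c a (bnd c a m + j)
      = (wordPrefix (arLimit c a) (bnd c a (m + 1)))[bnd c a m + j]'(by
        rw [wordPrefix_length]; exact hlt) := (wordPrefix_getElem _ hlt).symm
  rw [hL]
  have hlen : (wordPrefix (arLimit c a) (bnd c a m)).length = bnd c a m :=
    wordPrefix_length _ _
  have e1 := List.getElem_of_eq key (show bnd c a m + j
      < (wordPrefix (arLimit c a) (bnd c a (m + 1))).length by
    rw [wordPrefix_length]; exact hlt)
  rw [e1, List.getElem_append_right (by omega)]
  have hsub : substWord (arSubst (c 0)) [arLimit (shf c) a m]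
      = arSubst (c 0) (arLimit (shf c) a m) ++ [] := by simp [substWord]
  have e2 := List.getElem_of_eq hsub (show bnd c a m + j
      - (wordPrefix (arLimit c a) (bnd c a m)).length
        < (substWord (arSubst (c 0)) [arLimit (shf c) a m]).length by
    simp [substWord]; omega)
  rw [e2]
  rw [List.getElem_append_left (by omega)]
  congr 1
  omega

include hcard hdir in
theorem bnd_F1 (m : ℕ) : arLimit c a (bnd c a m) = arLimit (shf c) a m := by
  have h0 : 0 < (arSubst (c 0) (arLimit (shf c) a m)).length := by
    rw [arSubst_length]; split <;> omega
  have := block_get hcard c a hdir m h0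
  simpa using this.trans (by
    unfold arSubst; split <;> simp_all)

theorem bnd_len_one (m : ℕ) (h : arLimit (shf c) a m = c 0) :
    bnd c a (m + 1) = bnd c a m + 1 := by
  rw [bnd_succ, arSubst_length, if_pos h]

include hcard hdir in
theorem bnd_len_two (m : ℕ) (h : arLimit (shf c) a m ≠ c 0) :
    bnd c a (m + 1) = bnd c a m + 2 ∧ arLimit c a (bnd c a m + 1) = c 0 := by
  constructor
  · rw [bnd_succ, arSubst_length, if_neg h]
  · have h1 : 1 < (arSubst (c 0) (arLimit (shf c) a m)).length := by
      rw [arSubst_length, if_neg h]; omega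
    have := block_get hcard c a hdir m h1
    rw [this]
    simp [arSubst, h]

theorem bnd_step (m : ℕ) :
    bnd c a m < bnd c a (m + 1) ∧ bnd c a (m + 1) ≤ bnd c a m + 2 := by
  rw [bnd_succ, arSubst_length]; split <;> omega

theorem bnd_mono {m m' : ℕ} (h : m < m') : bnd c a m < bnd c a m' := by
  induction m' with
  | zero => omega
  | succ k ih =>
    have := bnd_step c a k
    rcases Nat.lt_or_ge m k with h' | h'
    · have := ih h'; omega
    · have : m = k := by omega
      subst this; omega

theorem bnd_mono_le {m m' : ℕ} (h : m ≤ m') : bnd c a m ≤ bnd c a m' := by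
  rcases Nat.eq_or_lt_of_le h with rfl | h'
  · exact le_refl _
  · exact (bnd_mono c a h').le

theorem bnd_ge (m : ℕ) : m ≤ bnd c a m := by
  induction m with
  | zero => omega
  | succ k ih => have := bnd_step c a k; omega

theorem bnd_cover (q : ℕ) : ∃ m, bnd c a m ≤ q ∧ q < bnd c a (m + 1) := by
  induction q with
  | zero =>
    refine ⟨0, ?_, ?_⟩
    · rw [bnd_zero]
    · have := bnd_step c a 0; rw [bnd_zero] at this; omega
  | succ q ih =>
    obtain ⟨m, h1, h2⟩ := ih
    rcases Nat.lt_or_ge (q + 1) (bnd c a (m + 1)) with h' | h'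
    · exact ⟨m, by omega, h'⟩
    · have he : bnd c a (m + 1) = q + 1 := by omega
      refine ⟨m + 1, by omega, ?_⟩
      have := bnd_step c a (m + 1); omega

include hcard hdir in
theorem adj (q : ℕ) : arLimit c a q = c 0 ∨ arLimit c a (q + 1) = c 0 := by
  obtain ⟨m, h1, h2⟩ := bnd_cover c a q
  by_cases hy : arLimit (shf c) a m = c 0
  · have hlen := bnd_len_one c a m hy
    have hq : q = bnd c a m := by omega
    left; rw [hq, bnd_F1 hcard c a hdir]; exact hy
  · obtain ⟨hlen, hmid⟩ := bnd_len_two hcard c a hdir m hy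
    rcases Nat.eq_or_lt_of_le h1 with he | hlt
    · right; rw [he] at hmid; exact hmid
    · left
      have hq : q = bnd c a m + 1 := by omega
      rw [hq]; exact hmid

include hcard hdir in
theorem bnd_F3 {q : ℕ} (h : arLimit c a q = c 0) : ∃ m, bnd c a m = q + 1 := by
  obtain ⟨m, h1, h2⟩ := bnd_cover c a q
  by_cases hy : arLimit (shf c) a m = c 0
  · have hlen := bnd_len_one c a m hy
    exact ⟨m + 1, by omega⟩
  · obtain ⟨hlen, hmid⟩ := bnd_len_two hcard c a hdir m hy
    rcases Nat.eq_or_lt_of_le h1 with he | hlt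
    · exfalso
      have := bnd_F1 hcard c a hdir m
      rw [he] at this
      exact hy (this.symm.trans h)
    · have hq : q = bnd c a m + 1 := by omega
      exact ⟨m + 1, by omega⟩

include hcard hdir in
theorem bnd_F3' (m : ℕ) : arLimit c a (bnd c a (m + 1) - 1) = c 0 := by
  by_cases hy : arLimit (shf c) a m = c 0
  · have hlen := bnd_len_one c a m hy
    rw [hlen, show bnd c a m + 1 - 1 = bnd c a m by omega, bnd_F1 hcard c a hdir]
    exact hy
  · obtain ⟨hlen, hmid⟩ := bnd_len_two hcard c a hdir m hy
    rw [hlen, show bnd c a m + 2 - 1 = bnd c a m + 1 by omega]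
    exact hmid

end Block

end ARPF

namespace ARPF

variable {A : Type*} [DecidableEq A] [Fintype A]

theorem hdir_shfK {c : ℕ → A} (hdir : ∀ b : A, ∀ N : ℕ, ∃ n, N ≤ n ∧ c n = b) (t : ℕ) :
    ∀ b : A, ∀ N : ℕ, ∃ n, N ≤ n ∧ shfK t c n = b := by
  intro b N
  obtain ⟨n, hn, he⟩ := hdir b (N + t)
  refine ⟨n - t, by omega, ?_⟩
  show c ((n - t) + t) = b
  rwa [show n - t + t = n by omega]

section Run

variable (hcard : 2 ≤ Fintype.card A) (c : ℕ → A) (a : A)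
  (hdir : ∀ b : A, ∀ N : ℕ, ∃ n, N ≤ n ∧ c n = b)

include hcard hdir in
theorem runDesc_ne (b : A) (hb : b ≠ c 0) (w : ℕ)
    (h0 : arLimit c a w = b) (h1 : arLimit c a (w + 1) = b) : False := by
  rcases adj hcard c a hdir w with h | h
  · exact hb (h0.symm.trans h)
  · exact hb (h1.symm.trans h)

include hcard hdir in
theorem runDesc_eq (w m : ℕ) (hrun : ∀ j < m + 1, arLimit c a (w + j) = c 0) :
    ∃ w', ∀ j < m, arLimit (shf c) a (w' + j) = c 0 := by
  have h0 : arLimit c a w = c 0 := by simpa using hrun 0 (by omega)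
  obtain ⟨i1, hi1⟩ := bnd_F3 hcard c a hdir h0
  have hstep : ∀ j, j < m → bnd c a (i1 + j) = w + 1 + j
      ∧ arLimit (shf c) a (i1 + j) = c 0 := by
    intro j
    induction j with
    | zero =>
      intro hj
      refine ⟨by simpa using hi1, ?_⟩
      have hF1 := bnd_F1 hcard c a hdir (i1 + 0)
      rw [show i1 + 0 = i1 by omega] at hF1 ⊢
      rw [← hF1, hi1]
      simpa using hrun 1 (by omega)
    | succ j ih =>
      intro hj
      obtain ⟨e, hl⟩ := ih (by omega)
      have hlen := bnd_len_one c a (i1 + j) hl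
      have e' : bnd c a (i1 + (j + 1)) = w + 1 + (j + 1) := by
        rw [show i1 + (j + 1) = (i1 + j) + 1 by omega, hlen, e]; omega
      refine ⟨e', ?_⟩
      have hF1 := bnd_F1 hcard c a hdir (i1 + (j + 1))
      rw [← hF1, e']
      have := hrun (j + 2) (by omega)
      rwa [show w + (j + 2) = w + 1 + (j + 1) by omega] at this
  exact ⟨i1, fun j hj => (hstep j hj).2⟩

end Run

theorem run_aux {A : Type*} [DecidableEq A] [Fintype A] (hcard : 2 ≤ Fintype.card A)
    (a b : A) : ∀ (t : ℕ) (c : ℕ → A), (∀ e : A, ∀ N : ℕ, ∃ n, N ≤ n ∧ c n = e) →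
    (∀ j' < t, c j' = b) → ∀ w, (∀ j < t + 2, arLimit c a (w + j) = b) →
    ∃ w', ∀ j < 2, arLimit (shfK t c) a (w' + j) = b := by
  intro t
  induction t with
  | zero =>
    intro c hdir hc w hrun
    exact ⟨w, fun j hj => hrun j (by omega)⟩
  | succ t ih =>
    intro c hdir hc w hrun
    have hb : c 0 = b := hc 0 (by omega)
    obtain ⟨w', hw'⟩ := runDesc_eq hcard c a hdir w (t + 2) (by
      intro j hj
      rw [hb]
      exact hrun j hj)
    have hc' : ∀ j' < t, shf c j' = b := by
      intro j' hj'
      exact hc (j' + 1) (by omega)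
    obtain ⟨w'', hw''⟩ := ih (shf c) (hdir_shf hdir) hc' w' (by
      intro j hj
      rw [← hb]
      exact hw' j hj)
    rw [shfK_shf] at hw''
    exact ⟨w'', hw''⟩

theorem run_bound {A : Type*} [DecidableEq A] [Fintype A] (hcard : 2 ≤ Fintype.card A)
    (c : ℕ → A) (a : A) (hdir : ∀ b : A, ∀ N : ℕ, ∃ n, N ≤ n ∧ c n = b)
    (C : ℕ) (hC : ∀ n : ℕ, ¬ (∀ j : ℕ, j ≤ C → c (n + j) = c n))
    (b : A) (w m : ℕ) (hrun : ∀ j < m, arLimit c a (w + j) = b) : m ≤ C + 1 := by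
  by_contra hm
  push_neg at hm
  by_cases hb : b = c 0
  · have hex0 := hC 0
    push_neg at hex0
    obtain ⟨jj, hjjC, hjne⟩ := hex0
    have hex : ∃ j, c j ≠ b := ⟨jj, by
      intro hco
      apply hjne
      rw [show (0:ℕ) + jj = jj by omega, hco, hb]⟩
    have hj0 : c (Nat.find hex) ≠ b := Nat.find_spec hex
    have hmin : ∀ j' < Nat.find hex, c j' = b := by
      intro j' hj'
      have := Nat.find_min hex hj'
      simpa using this
    have hj0C : Nat.find hex ≤ C := by
      have hle : Nat.find hex ≤ jj := Nat.find_min' hex (by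
        intro hco
        apply hjne
        rw [show (0:ℕ) + jj = jj by omega, hco, hb])
      omega
    obtain ⟨w', hw'⟩ := run_aux hcard a b (Nat.find hex) c hdir hmin w
      (fun j hj => hrun j (by omega))
    refine runDesc_ne hcard (shfK (Nat.find hex) c) a (hdir_shfK hdir _) b ?_ w'
      (hw' 0 (by omega)) (hw' 1 (by omega))
    intro he
    apply hj0
    have h2 : shfK (Nat.find hex) c 0 = c (Nat.find hex) := by simp [shfK]
    rw [h2] at he
    exact he.symm
  · exact runDesc_ne hcard c a hdir b hb w
      (by simpa using hrun 0 (by omega)) (hrun 1 (by omega))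

end ARPF

namespace ARPF

variable {A : Type*} [DecidableEq A]

/-- Number of positions `t ∈ [lo, lo+len)` with `y t = e`. -/
def cnt (y : ℕ → A) (e : A) (lo len : ℕ) : ℕ :=
  ((Finset.range len).filter fun j => y (lo + j) = e).card

theorem cnt_le (y : ℕ → A) (e : A) (lo len : ℕ) : cnt y e lo len ≤ len := by
  classical
  calc ((Finset.range len).filter fun j => y (lo + j) = e).card
      ≤ (Finset.range len).card := Finset.card_filter_le _ _
    _ = len := Finset.card_range len

theorem cnt_zero (y : ℕ → A) (e : A) (lo : ℕ) : cnt y e lo 0 = 0 := by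
  simp [cnt]

theorem cnt_succ (y : ℕ → A) (e : A) (lo n : ℕ) :
    cnt y e lo (n + 1) = cnt y e lo n + (if y (lo + n) = e then 1 else 0) := by
  classical
  unfold cnt
  rw [Finset.range_add_one, Finset.filter_insert]
  split
  · rw [Finset.card_insert_of_notMem (by simp)]
  · omega

theorem cnt_split (y : ℕ → A) (e : A) (lo m n : ℕ) :
    cnt y e lo (m + n) = cnt y e lo m + cnt y e (lo + m) n := by
  induction n with
  | zero => simp [cnt_zero]
  | succ n ih =>
    rw [show m + (n + 1) = (m + n) + 1 by omega, cnt_succ, ih, cnt_succ,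
      show lo + (m + n) = lo + m + n by omega]
    omega

theorem cnt_pos (y : ℕ → A) (e : A) (lo len : ℕ) (h1 : 1 ≤ len) (h2 : y lo = e) :
    1 ≤ cnt y e lo len := by
  classical
  have : (0 : ℕ) ∈ (Finset.range len).filter fun j => y (lo + j) = e := by
    simp [Finset.mem_filter, Finset.mem_range]
    constructor
    · omega
    · simpa using h2
  exact Finset.card_pos.mpr ⟨0, this⟩

theorem cnt_lt_of_ne (y : ℕ → A) (e : A) (lo len j : ℕ) (hj : j < len)
    (hne : y (lo + j) ≠ e) : cnt y e lo len < len := by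
  classical
  have hss : ((Finset.range len).filter fun j => y (lo + j) = e) ⊂ Finset.range len := by
    refine Finset.ssubset_iff_of_subset (Finset.filter_subset _ _) |>.mpr ?_
    exact ⟨j, Finset.mem_range.mpr hj, by simp [hne]⟩
  calc cnt y e lo len < (Finset.range len).card := Finset.card_lt_card hss
    _ = len := Finset.card_range len

theorem cnt_window_succ (y : ℕ → A) (e : A) (w p : ℕ) (h : y w = y (w + p)) :
    cnt y e w p = cnt y e (w + 1) p := by
  classical
  have h1 := cnt_succ y e w p
  have h2 := cnt_split y e w 1 p
  rw [show (1 : ℕ) + p = p + 1 by omega] at h2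
  have h3 : cnt y e w 1 = if y (w + p) = e then 1 else 0 := by
    rw [show cnt y e w 1 = cnt y e w (0 + 1) by norm_num, cnt_succ]
    rw [cnt_zero]
    rw [show w + 0 = w by omega, h]
    omega
  by_cases he : y (w + p) = e <;> simp [he] at h1 h3 <;> omega

theorem cnt_invar (y : ℕ → A) (e : A) (α p L : ℕ)
    (hper : ∀ j, j + p < L → y (α + j) = y (α + j + p)) :
    ∀ d, d + p ≤ L → cnt y e (α + d) p = cnt y e α p := by
  intro d
  induction d with
  | zero => intro _; rw [show α + 0 = α by omega]
  | succ d ih =>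
    intro hd
    rw [show α + (d + 1) = (α + d) + 1 by omega]
    rw [← cnt_window_succ y e (α + d) p (by
      have := hper d (by omega)
      rwa [show α + d + p = α + (d + p) by omega] at this ⊢)]
    exact ih (by omega)

theorem cnt_runbound (y : ℕ → A) (e : A) (C : ℕ)
    (h : ∀ w : ℕ, ∃ j, j < C + 2 ∧ y (w + j) ≠ e) (lo len : ℕ) :
    cnt y e lo len + len / (C + 2) ≤ len := by
  have hchunk : ∀ w, cnt y e w (C + 2) ≤ C + 1 := by
    intro w
    obtain ⟨j, hj, hne⟩ := h w
    have := cnt_lt_of_ne y e w (C + 2) j hj hne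
    omega
  have hq : ∀ q w, cnt y e w (q * (C + 2)) ≤ q * (C + 1) := by
    intro q
    induction q with
    | zero => intro w; simp [cnt_zero]
    | succ q ih =>
      intro w
      rw [show (q + 1) * (C + 2) = q * (C + 2) + (C + 2) by ring, cnt_split]
      have := ih w
      have := hchunk (w + q * (C + 2))
      have : (q + 1) * (C + 1) = q * (C + 1) + (C + 1) := by ring
      omega
  have hdm : (C + 2) * (len / (C + 2)) + len % (C + 2) = len := Nat.div_add_mod len (C + 2)
  set q := len / (C + 2)
  set r := len % (C + 2)
  have hsplit : cnt y e lo len = cnt y e lo (q * (C + 2)) + cnt y e (lo + q * (C + 2)) r := by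
    rw [← cnt_split, show q * (C + 2) + r = len by rw [mul_comm]; omega]
  have h1 := hq q lo
  have h2 := cnt_le y e (lo + q * (C + 2)) r
  have h3 : q * (C + 2) = q * (C + 1) + q := by ring
  have h4 : (C + 2) * q = q * (C + 2) := by ring
  omega

end ARPF

namespace ARPF

variable {A : Type*} [DecidableEq A] [Fintype A]

section Inj

variable (hcard : 2 ≤ Fintype.card A) (c : ℕ → A) (a : A)
  (hdir : ∀ b : A, ∀ N : ℕ, ∃ n, N ≤ n ∧ c n = b)

/-- Partial inverse of `bnd`. -/
noncomputable def invb (c : ℕ → A) (a : A) (q : ℕ) : ℕ :=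
  if h : ∃ m, bnd c a m = q + 1 then Nat.find h else 0

theorem invb_spec {c : ℕ → A} {a : A} {q : ℕ} (h : ∃ m, bnd c a m = q + 1) :
    bnd c a (invb c a q) = q + 1 := by
  unfold invb
  rw [dif_pos h]
  exact Nat.find_spec h

theorem bnd_lt_iff {c : ℕ → A} {a : A} {m m' : ℕ} :
    bnd c a m < bnd c a m' ↔ m < m' := by
  constructor
  · intro h
    by_contra h'
    have := bnd_mono_le c a (show m' ≤ m by omega)
    omega
  · exact bnd_mono c a

theorem bnd_pos {c : ℕ → A} {a : A} {m : ℕ} (h : 1 ≤ m) : 1 ≤ bnd c a m := by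
  have : bnd c a 0 < bnd c a m := bnd_mono c a h
  omega

include hcard hdir in
theorem bnd_F3'' {m : ℕ} (h : 1 ≤ m) : arLimit c a (bnd c a m - 1) = c 0 := by
  have := bnd_F3' hcard c a hdir (m - 1)
  rwa [show m - 1 + 1 = m by omega] at this

include hcard hdir in
theorem inj_lower {i j lo len : ℕ} (hi : 1 ≤ i)
    (hmem : ∀ i', i ≤ i' → i' < j → lo ≤ bnd c a i' - 1 ∧ bnd c a i' - 1 < lo + len) :
    j - i ≤ cnt (arLimit c a) (c 0) lo len := by
  classical
  have hcard' := Finset.card_le_card_of_injOn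
    (f := fun i' => bnd c a i' - 1 - lo)
    (s := Finset.Ico i j)
    (t := (Finset.range len).filter fun t => arLimit c a (lo + t) = c 0)
    (by
      intro i' hi'
      dsimp only
      rw [Finset.mem_coe, Finset.mem_Ico] at hi'
      obtain ⟨h1, h2⟩ := hmem i' hi'.1 hi'.2
      rw [Finset.mem_coe, Finset.mem_filter, Finset.mem_range]
      constructor
      · omega
      · rw [show lo + (bnd c a i' - 1 - lo) = bnd c a i' - 1 by omega]
        exact bnd_F3'' hcard c a hdir (by omega))
    (by
      intro i' hi' i'' hi'' he
      dsimp only at he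
      simp only [Finset.coe_Ico, Set.mem_Ico] at hi' hi''
      obtain ⟨h1, h2⟩ := hmem i' hi'.1 hi'.2
      obtain ⟨h1', h2'⟩ := hmem i'' hi''.1 hi''.2
      have hb1 : 1 ≤ bnd c a i' := bnd_pos (by omega)
      have hb2 : 1 ≤ bnd c a i'' := bnd_pos (by omega)
      have : bnd c a i' = bnd c a i'' := by omega
      rcases Nat.lt_trichotomy i' i'' with h' | h' | h'
      · have := bnd_mono c a h'; omega
      · exact h'
      · have := bnd_mono c a h'; omega)
  rwa [Nat.card_Ico] at hcard'

include hcard hdir in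
theorem inj_upper {i j : ℕ} (hi : 1 ≤ i) (hij : i ≤ j) :
    cnt (arLimit c a) (c 0) (bnd c a i - 1) (bnd c a j - bnd c a i) ≤ j - i := by
  classical
  have hbi : 1 ≤ bnd c a i := bnd_pos hi
  have hcard' := Finset.card_le_card_of_injOn
    (f := fun t => invb c a (bnd c a i - 1 + t))
    (s := (Finset.range (bnd c a j - bnd c a i)).filter
      fun t => arLimit c a (bnd c a i - 1 + t) = c 0)
    (t := Finset.Ico i j)
    (by
      intro t ht
      dsimp only
      rw [Finset.mem_coe, Finset.mem_filter, Finset.mem_range] at ht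
      obtain ⟨ht1, ht2⟩ := ht
      obtain ⟨m, hm⟩ := bnd_F3 hcard c a hdir ht2
      have hspec : bnd c a (invb c a (bnd c a i - 1 + t)) = bnd c a i + t := by
        rw [invb_spec ⟨m, hm⟩]; omega
      rw [Finset.mem_coe, Finset.mem_Ico]
      constructor
      · by_contra h'
        have := bnd_mono c a (show invb c a (bnd c a i - 1 + t) < i by omega)
        omega
      · have hlt : bnd c a (invb c a (bnd c a i - 1 + t)) < bnd c a j := by
          have := bnd_mono_le c a hij
          omega
        exact bnd_lt_iff.mp hlt)
    (by
      intro t ht t' ht' he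
      dsimp only at he
      simp only [Finset.coe_filter, Set.mem_setOf_eq, Finset.mem_range] at ht ht'
      obtain ⟨m, hm⟩ := bnd_F3 hcard c a hdir ht.2
      obtain ⟨m', hm'⟩ := bnd_F3 hcard c a hdir ht'.2
      have h1 : bnd c a (invb c a (bnd c a i - 1 + t)) = bnd c a i + t := by
        rw [invb_spec ⟨m, hm⟩]; omega
      have h2 : bnd c a (invb c a (bnd c a i - 1 + t')) = bnd c a i + t' := by
        rw [invb_spec ⟨m', hm'⟩]; omega
      rw [he] at h1
      omega)
  rwa [Nat.card_Ico] at hcard'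

end Inj

end ARPF

namespace ARPF

variable {A : Type*} [DecidableEq A] [Fintype A]

theorem hC_shf {c : ℕ → A} {C : ℕ} (hC : ∀ n : ℕ, ¬ (∀ j : ℕ, j ≤ C → c (n + j) = c n)) :
    ∀ n : ℕ, ¬ (∀ j : ℕ, j ≤ C → (shf c) (n + j) = (shf c) n) := by
  intro n hh
  apply hC (n + 1)
  intro j hj
  have := hh j hj
  show c (n + 1 + j) = c (n + 1)
  rw [show n + 1 + j = n + j + 1 by omega]
  exact this

theorem no_long_power (hcard : 2 ≤ Fintype.card A) (C : ℕ) (a : A) :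
    ∀ p : ℕ, 1 ≤ p → ∀ c : ℕ → A,
    (∀ b : A, ∀ N : ℕ, ∃ n, N ≤ n ∧ c n = b) →
    (∀ n : ℕ, ¬ (∀ j : ℕ, j ≤ C → c (n + j) = c n)) →
    ∀ α L : ℕ, (∀ j, j + p < L → arLimit c a (α + j) = arLimit c a (α + j + p)) →
    L + (2 * C + 3) < (3 * C + 7) * p := by
  intro p
  induction p using Nat.strong_induction_on with
  | _ p ih =>
  intro hp c hdir hCc α L hper
  by_contra hcon
  push_neg at hcon
  set y := arLimit c a with hy
  -- L is reasonably large
  have hprod1 : (3 * C + 7) * 1 ≤ (3 * C + 7) * p := Nat.mul_le_mul_left _ hp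
  have hLbig : 3 * C + 7 ≤ L + (2 * C + 3) := by omega
  -- case p = 1 : constant run
  by_cases hp1 : p = 1
  · subst hp1
    have hrun : ∀ j, j < L → y (α + j) = y α := by
      intro j
      induction j using Nat.strong_induction_on with
      | _ j ihj =>
        intro hj
        rcases Nat.eq_zero_or_pos j with rfl | hjpos
        · rfl
        · have h1 := hper (j - 1) (by omega)
          rw [show α + (j - 1) + 1 = α + j by omega] at h1
          rw [← h1]
          exact ihj (j - 1) (by omega) (by omega)
    have hle := run_bound hcard c a hdir C hCc (y α) α L (fun j hj => hrun j hj)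
    omega
  have hp2 : 2 ≤ p := by omega
  have hpsmall : p + 1 ≤ L := by
    have h2 : (3 * C + 6) * 1 ≤ (3 * C + 6) * p := Nat.mul_le_mul_left _ hp
    have h3 : (3 * C + 7) * p = (3 * C + 6) * p + p := by ring
    omega
  -- case: first window all equal to c 0
  by_cases hall : ∀ j, j < p → y (α + j) = c 0
  · have hrun : ∀ j, j < L → y (α + j) = c 0 := by
      intro j
      induction j using Nat.strong_induction_on with
      | _ j ihj =>
        intro hj
        rcases Nat.lt_or_ge j p with h' | h'
        · exact hall j h'
        · have h1 := hper (j - p) (by omega)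
          rw [show α + (j - p) + p = α + j by omega] at h1
          rw [← h1]
          exact ihj (j - p) (by omega) (by omega)
    have hle := run_bound hcard c a hdir C hCc (c 0) α L (fun j hj => hrun j hj)
    omega
  push_neg at hall
  obtain ⟨j0, hj0lt, hj0ne⟩ := hall
  -- number of occurrences of the letter c 0 in a p-window
  set s := cnt y (c 0) α p with hs
  have hsle : s ≤ p := cnt_le _ _ _ _
  have hwin : ∀ d, d + p ≤ L → cnt y (c 0) (α + d) p = s :=
    fun d hd => cnt_invar y (c 0) α p L hper d hd
  have hs1 : 1 ≤ s := by
    rcases adj hcard c a hdir α with h | h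
    · exact cnt_pos _ _ _ _ (by omega) h
    · have hsplit := cnt_split y (c 0) α 1 (p - 1)
      rw [show 1 + (p - 1) = p by omega] at hsplit
      have hpos := cnt_pos y (c 0) (α + 1) (p - 1) (by omega) h
      omega
  have hsp : s + 1 ≤ p := by
    have := cnt_lt_of_ne y (c 0) α p j0 hj0lt hj0ne
    omega
  -- run-freeness of the letter c 0
  have hnorun : ∀ w : ℕ, ∃ j, j < C + 2 ∧ y (w + j) ≠ c 0 := by
    intro w
    by_contra hcontra
    push_neg at hcontra
    have := run_bound hcard c a hdir C hCc (c 0) w (C + 2) (fun j hj => hcontra j hj)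
    omega
  -- boundary indices
  have hex0 : ∃ i, α < bnd c a i := ⟨α + 1, by have := bnd_ge c a (α + 1); omega⟩
  have hex1 : ∃ i, α + L - 1 < bnd c a i := ⟨α + L, by have := bnd_ge c a (α + L); omega⟩
  set i0 := Nat.find hex0 with hi0def
  set i1 := Nat.find hex1 with hi1def
  have hi0 : α < bnd c a i0 := Nat.find_spec hex0
  have hi1 : α + L - 1 < bnd c a i1 := Nat.find_spec hex1
  have hi1min : ∀ i, i < i1 → bnd c a i ≤ α + L - 1 := by
    intro i hi
    have := Nat.find_min hex1 hi
    omega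
  have hi0pos : 1 ≤ i0 := by
    by_contra h
    have h0 : i0 = 0 := by omega
    rw [h0, bnd_zero] at hi0
    omega
  have hi01 : i0 ≤ i1 := by
    apply Nat.find_min' hex0
    omega
  -- the count of c 0 in the region is at most i1 - i0
  have hcnt_le : cnt y (c 0) α (L - 1) ≤ i1 - i0 := by
    classical
    have hcard' := Finset.card_le_card_of_injOn
      (f := fun t => invb c a (α + t))
      (s := (Finset.range (L - 1)).filter fun t => y (α + t) = c 0)
      (t := Finset.Ico i0 i1)
      (by
        intro t ht
        dsimp only
        rw [Finset.mem_coe, Finset.mem_filter, Finset.mem_range] at ht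
        obtain ⟨ht1, ht2⟩ := ht
        obtain ⟨m, hm⟩ := bnd_F3 hcard c a hdir ht2
        have hspec : bnd c a (invb c a (α + t)) = α + t + 1 := invb_spec ⟨m, hm⟩
        rw [Finset.mem_coe, Finset.mem_Ico]
        constructor
        · by_contra h'
          have h2 := Nat.find_min hex0 (show invb c a (α + t) < i0 by omega)
          omega
        · by_contra h'
          have h2 := bnd_mono_le c a (show i1 ≤ invb c a (α + t) by omega)
          omega)
      (by
        intro t ht t' ht' he
        dsimp only at he
        simp only [Finset.coe_filter, Set.mem_setOf_eq, Finset.mem_range] at ht ht'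
        obtain ⟨m, hm⟩ := bnd_F3 hcard c a hdir ht.2
        obtain ⟨m', hm'⟩ := bnd_F3 hcard c a hdir ht'.2
        have h1 : bnd c a (invb c a (α + t)) = α + t + 1 := invb_spec ⟨m, hm⟩
        have h2 : bnd c a (invb c a (α + t')) = α + t' + 1 := invb_spec ⟨m', hm'⟩
        rw [he] at h1
        omega)
    rwa [Nat.card_Ico] at hcard'
  -- multi-window counting
  have hmulti : ∀ k d, d + p * k ≤ L → cnt y (c 0) (α + d) (p * k) = k * s := by
    intro k
    induction k with
    | zero => intro d _; simp [cnt_zero]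
    | succ k ihk =>
      intro d hd
      have hpk : p * (k + 1) = p * k + p := by ring
      rw [hpk] at hd ⊢
      rw [cnt_split]
      rw [ihk d (by omega)]
      rw [show α + d + p * k = α + (d + p * k) by omega]
      rw [hwin (d + p * k) (by omega)]
      ring
  -- main counting lower bound
  have hbig : (3 * C + 7) * s ≤ cnt y (c 0) α (L - 1) + (2 * C + 3) := by
    set W := L - 1 with hW
    set m := W / p with hm
    set r := W % p with hr
    have hdm : p * m + r = W := Nat.div_add_mod W p
    have hrp : r < p := Nat.mod_lt _ (by omega)
    rcases Nat.lt_or_ge m (3 * C + 7) with hmlt | hmge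
    · -- m < 3C+7
      set ℓ := p - r with hell
      have hellpos : 1 ≤ ℓ := by omega
      -- split the window count
      have hWsplit : cnt y (c 0) α W = cnt y (c 0) α r + cnt y (c 0) (α + r) (p * m) := by
        rw [← cnt_split, show r + p * m = W by omega]
      have hmid : cnt y (c 0) (α + r) (p * m) = m * s := hmulti m r (by omega)
      -- first window splits as r-part plus ℓ-part
      have hsplit2 : s = cnt y (c 0) α r + cnt y (c 0) (α + r) ℓ := by
        rw [hs, show p = r + ℓ by omega, cnt_split]
      have hrb := cnt_runbound y (c 0) C hnorun (α + r) ℓ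
      set D := 3 * C + 7 - 1 - m with hD
      have hDm : D + 1 + m = 3 * C + 7 := by omega
      have hPm : (3 * C + 7) * p = D * p + p + m * p := by rw [← hDm]; ring
      have hmp : m * p = p * m := by ring
      have hDineq : D * p + ℓ ≤ (2 * C + 3) + 1 := by omega
      have hPs : (3 * C + 7) * s = D * s + s + m * s := by rw [← hDm]; ring
      have hDs : D * s ≤ D * p := Nat.mul_le_mul_left D hsle
      rcases Nat.lt_or_ge ℓ (C + 2) with hl1 | hl2
      · -- small remainder
        have hfl : ℓ / (C + 2) = 0 := Nat.div_eq_of_lt hl1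
        rcases Nat.eq_zero_or_pos D with hD0 | hDpos
        · have h0s : D * s = 0 := by rw [hD0]; ring
          omega
        · have hDs' : D * s + D ≤ D * p := by
            have hmm : D * (s + 1) ≤ D * p := Nat.mul_le_mul_left D hsp
            rw [Nat.mul_add] at hmm
            omega
          omega
      · -- big remainder: ℓ / (C+2) ≥ 1
        have hfl : 1 ≤ ℓ / (C + 2) := (Nat.one_le_div_iff (by omega)).mpr hl2
        omega
    · -- m large: trivial
      have hWsplit : cnt y (c 0) α W = cnt y (c 0) (α + 0) (p * m) + cnt y (c 0) (α + p * m) r := by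
        rw [show α + 0 = α by omega, ← cnt_split, show p * m + r = W by omega]
      have hmid : cnt y (c 0) (α + 0) (p * m) = m * s := hmulti m 0 (by omega)
      have : (3 * C + 7) * s ≤ m * s := Nat.mul_le_mul_right s hmge
      omega
  -- pullback periodicity
  have hbnd_step : ∀ i, i0 ≤ i → i + s < i1 → bnd c a (i + s) = bnd c a i + p := by
    intro i hii0 his
    have hi1le : 1 ≤ i := le_trans hi0pos hii0
    have hqα : α < bnd c a i := lt_of_lt_of_le hi0 (bnd_mono_le c a hii0)
    have hqL : bnd c a i ≤ α + L - 1 := hi1min i (by omega)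
    have hq'L : bnd c a (i + s) ≤ α + L - 1 := hi1min (i + s) his
    have hqq' : bnd c a i < bnd c a (i + s) := bnd_mono c a (by omega)
    set q := bnd c a i with hqdef
    set q' := bnd c a (i + s) with hq'def
    -- Step A: q - 1 + p ≤ α + L - 1
    have hstepA : q - 1 + p ≤ α + L - 1 := by
      by_contra hA
      push_neg at hA
      have hwle : α + (L - 1 - p) = α + L - 1 - p := by omega
      have hcntw : cnt y (c 0) (α + L - 1 - p) p = s := by
        rw [← hwle]
        exact hwin (L - 1 - p) (by omega)
      have hlow := inj_lower hcard c a hdir (i := i) (j := i + s + 1)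
        (lo := α + L - 1 - p) (len := p) hi1le (by
          intro i' h1 h2
          have hb1 : q ≤ bnd c a i' := bnd_mono_le c a h1
          have hb2 : bnd c a i' ≤ q' := bnd_mono_le c a (by omega)
          constructor <;> omega)
      rw [hcntw] at hlow
      omega
    -- Step B: q' < q + p impossible
    have hstepB : q + p ≤ q' := by
      by_contra hB
      push_neg at hB
      have hwle : α + (q - 1 - α) = q - 1 := by omega
      have hcntq : cnt y (c 0) (q - 1) p = s := by
        rw [← hwle]
        exact hwin (q - 1 - α) (by omega)
      have hlow := inj_lower hcard c a hdir (i := i) (j := i + s + 1)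
        (lo := q - 1) (len := p) hi1le (by
          intro i' h1 h2
          have hb1 : q ≤ bnd c a i' := bnd_mono_le c a h1
          have hb2 : bnd c a i' ≤ q' := bnd_mono_le c a (by omega)
          constructor <;> omega)
      rw [hcntq] at hlow
      omega
    -- Step C: q + p < q' impossible
    have hstepC : q' ≤ q + p := by
      by_contra hC2
      push_neg at hC2
      have hupp' := inj_upper hcard c a hdir (i := i) (j := i + s) hi1le (by omega)
      have hupp : cnt y (c 0) (bnd c a i - 1) (bnd c a (i + s) - bnd c a i) ≤ i + s - i := hupp'
      rw [← hqdef, ← hq'def] at hupp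
      have hsplitC : cnt y (c 0) (q - 1) (q' - q)
          = cnt y (c 0) (q - 1) p + cnt y (c 0) (q - 1 + p) (q' - q - p) := by
        rw [← cnt_split]
        congr 1
        omega
      have hwle : α + (q - 1 - α) = q - 1 := by omega
      have hcntq : cnt y (c 0) (q - 1) p = s := by
        rw [← hwle]
        exact hwin (q - 1 - α) (by omega)
      have hyq : y (q - 1) = c 0 := bnd_F3'' hcard c a hdir hi1le
      have hyqp : y (q - 1 + p) = c 0 := by
        have hh := hper (q - 1 - α) (by omega)
        rw [hwle] at hh
        rw [← hh]
        exact hyq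
      have hpos := cnt_pos y (c 0) (q - 1 + p) (q' - q - p) (by omega) hyqp
      omega
    omega
  have hper' : ∀ t, t + s < i1 - i0 →
      arLimit (shf c) a (i0 + t) = arLimit (shf c) a (i0 + t + s) := by
    intro t hts
    have hstep := hbnd_step (i0 + t) (by omega) (by omega)
    have hF1a := bnd_F1 hcard c a hdir (i0 + t)
    have hF1b := bnd_F1 hcard c a hdir (i0 + t + s)
    rw [show i0 + t + s = i0 + (t + s) by omega] at hF1b hstep ⊢
    rw [← hF1a, ← hF1b, hstep]
    have hqα : α < bnd c a (i0 + t) := lt_of_lt_of_le hi0 (bnd_mono_le c a (by omega))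
    have hqL : bnd c a (i0 + (t + s)) ≤ α + L - 1 := hi1min _ (by omega)
    have hh := hper (bnd c a (i0 + t) - α) (by omega)
    rw [show α + (bnd c a (i0 + t) - α) = bnd c a (i0 + t) by omega] at hh
    exact hh
  -- apply the induction hypothesis at level 1
  have hIH := ih s (by omega) hs1 (shf c) (hdir_shf hdir) (hC_shf hCc) i0 (i1 - i0) hper'
  omega

end ARPF

namespace ARPF

variable {A : Type*} [DecidableEq A]

theorem length_flatten_replicate (v : List A) (P : ℕ) :
    (List.flatten (List.replicate P v)).length = P * v.length := by
  induction P with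
  | zero => simp
  | succ P ihP =>
    rw [List.replicate_succ, List.flatten_cons, List.length_append, ihP]
    ring

theorem getElem_flatten_replicate (v : List A) (hlen : 0 < v.length) :
    ∀ (P j : ℕ) (h : j < (List.flatten (List.replicate P v)).length),
    (List.flatten (List.replicate P v))[j]
      = v[j % v.length]'(Nat.mod_lt _ hlen) := by
  intro P
  induction P with
  | zero => intro j h; simp at h
  | succ P ihP =>
    intro j h
    have he : (List.replicate (P + 1) v).flatten = v ++ (List.replicate P v).flatten := by
      rw [List.replicate_succ, List.flatten_cons]
    have h2 : j < (v ++ (List.replicate P v).flatten).length := by rw [← he]; exact h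
    rw [List.getElem_of_eq he h]
    rcases Nat.lt_or_ge j v.length with h' | h'
    · rw [List.getElem_append_left h']
      congr 1
      exact (Nat.mod_eq_of_lt h').symm
    · rw [List.getElem_append_right h']
      rw [ihP (j - v.length) (by rw [List.length_append] at h2; omega)]
      congr 1
      exact (Nat.mod_eq_sub_mod h').symm

end ARPF


/-- Lemma: an Arnoux–Rauzy word with bounded weak partial quotients is `P`-power-free
for some `P ≥ 1`. -/
theorem stmt17 {A : Type*} [Fintype A] [DecidableEq A] (hcard : 2 ≤ Fintype.card A)
    (c : ℕ → A) (hdir : ∀ b : A, ∀ N : ℕ, ∃ n, N ≤ n ∧ c n = b)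
    (C : ℕ) (hC : ∀ n : ℕ, ¬ (∀ j : ℕ, j ≤ C → c (n + j) = c n)) (a : A) :
    ∃ P : ℕ, 1 ≤ P ∧ PowerFree P (arLimit c a) := by

  refine ⟨3 * C + 7, by omega, ?_⟩
  intro v hv hfac
  obtain ⟨i, hocc⟩ := hfac
  unfold OccursAt at hocc
  have hlenv : 0 < v.length := List.length_pos_iff.mpr hv
  have hlenw : (List.flatten (List.replicate (3 * C + 7) v)).length
      = (3 * C + 7) * v.length := ARPF.length_flatten_replicate v _
  have hxw : ∀ j (hj : j < (List.flatten (List.replicate (3 * C + 7) v)).length),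
      (List.flatten (List.replicate (3 * C + 7) v))[j] = arLimit c a (i + j) := by
    intro j hj
    rw [List.getElem_of_eq hocc hj]
    simp
  have hper : ∀ j, j + v.length < (3 * C + 7) * v.length →
      arLimit c a (i + j) = arLimit c a (i + j + v.length) := by
    intro j hj
    have h1 : j < (List.flatten (List.replicate (3 * C + 7) v)).length := by
      rw [hlenw]; omega
    have h2 : j + v.length < (List.flatten (List.replicate (3 * C + 7) v)).length := by
      rw [hlenw]; omega
    rw [← hxw j h1]
    rw [show i + j + v.length = i + (j + v.length) by omega]
    rw [← hxw (j + v.length) h2]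
    rw [ARPF.getElem_flatten_replicate v hlenv _ j h1]
    rw [ARPF.getElem_flatten_replicate v hlenv _ (j + v.length) h2]
    congr 1
    exact (Nat.add_mod_right j v.length).symm
  have hmain := ARPF.no_long_power hcard C a v.length hlenv c hdir hC i
    ((3 * C + 7) * v.length) hper
  have : (3 * C + 7) * v.length + (2 * C + 3) < (3 * C + 7) * v.length := hmain
  omega
end

section
/- Let τ : A → A* be a substitution on a finite alphabet A, prolongable on a letter, and let x = τ^ω(a) be its fixed point. Suppose: (i) there exists C > 0 such that |τ^n(a)| ≤ C·|τ^n(b)| for every n ≥ 1 and all growing letters a, b of τ; and (ii) the set of finite words consisting only of bounded letters of τ that occur as factors of some τ^n(c) (n ≥ 1, c ∈ A) is finite (a tameness condition). Then x has linear factor complexity, i.e., there exists D > 0 such that p_x(n) ≤ D·n + D for all n ≥ 0. -/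
open scoped Classical

/-- A letter `b` is bounded for the substitution `τ` if the lengths `|τ^n(b)|` are bounded. -/
def BoundedLetter {A : Type*} (τ : A → List A) (b : A) : Prop :=
  ∃ M : ℕ, ∀ n : ℕ, (substIter τ n b).length ≤ M

section AuxLemmas

variable {A : Type*} {B : Type*}

lemma occursAt_iff {x : ℕ → A} {w : List A} {i : ℕ} :
    OccursAt x w i ↔ ∀ j, (h : j < w.length) → w[j] = x (i + j) := by
  constructor
  · intro hw j hj
    rw [List.getElem_of_eq hw]
    simp
  · intro h
    apply List.ext_getElem (by simp)
    intro j h1 h2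
    simpa using h j h1

lemma substWord_nil (τ : A → List B) : substWord τ [] = [] := rfl

lemma substWord_cons (τ : A → List B) (c : A) (w : List A) :
    substWord τ (c :: w) = τ c ++ substWord τ w := by simp [substWord]

lemma substWord_append (τ : A → List B) (u v : List A) :
    substWord τ (u ++ v) = substWord τ u ++ substWord τ v := by simp [substWord]

lemma substWord_flatten (τ : A → List B) (L : List (List A)) :
    substWord τ L.flatten = (L.map (substWord τ)).flatten := by
  induction L with
  | nil => rfl
  | cons u L ih => simp [substWord_append, ih]

lemma substWord_length (τ : A → List B) (w : List A) :
    (substWord τ w).length = (w.map fun c => (τ c).length).sum := by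
  simp [substWord, Function.comp_def]

lemma substIter_zero (τ : A → List A) (b : A) : substIter τ 0 b = [b] := rfl

lemma substIter_add (τ : A → List A) (m n : ℕ) (b : A) :
    substIter τ (m + n) b = substWord (substIter τ n) (substIter τ m b) := by
  induction m generalizing b with
  | zero => simp [substIter_zero, substWord]
  | succ m ih =>
      have heq : m + 1 + n = (m + n) + 1 := by omega
      rw [heq]
      calc substIter τ ((m + n) + 1) b
          = ((τ b).map (substIter τ (m + n))).flatten := rfl
        _ = ((τ b).map fun c => substWord (substIter τ n) (substIter τ m c)).flatten := by
            congr 1; exact List.map_congr_left fun c _ => ih c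
        _ = substWord (substIter τ n) (((τ b).map (substIter τ m)).flatten) := by
            rw [substWord_flatten]; simp [List.map_map, Function.comp_def]
        _ = substWord (substIter τ n) (substIter τ (m + 1) b) := rfl

lemma substIter_ne_nil {τ : A → List A} (hτ : ∀ b, τ b ≠ []) :
    ∀ n b, substIter τ n b ≠ [] := by
  intro n
  induction n with
  | zero => intro b; simp [substIter_zero]
  | succ n ih =>
      intro b
      show substWord (substIter τ n) (τ b) ≠ []
      obtain ⟨c, t, hct⟩ := List.exists_cons_of_ne_nil (hτ b)
      rw [hct, substWord_cons]
      exact fun h => ih c (List.append_eq_nil_iff.mp h).1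

lemma substIter_length_pos {τ : A → List A} (hτ : ∀ b, τ b ≠ []) (n : ℕ) (b : A) :
    1 ≤ (substIter τ n b).length :=
  List.length_pos_iff.mpr (substIter_ne_nil hτ n b)

lemma tau_head {τ : A → List A} {a : A} (hp : Prolongable τ a) :
    ∃ t, τ a = a :: t := by
  have h := hp.1
  cases hτ : τ a with
  | nil => rw [hτ] at h; simp at h
  | cons c t => rw [hτ] at h; simp at h; exact ⟨t, by rw [h]⟩

lemma substIter_prefix_succ {τ : A → List A} {a : A} (hp : Prolongable τ a) (n : ℕ) :
    substIter τ n a <+: substIter τ (n + 1) a := by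
  obtain ⟨t, ht⟩ := tau_head hp
  show substIter τ n a <+: substWord (substIter τ n) (τ a)
  rw [ht, substWord_cons]
  exact ⟨substWord (substIter τ n) t, rfl⟩

lemma substIter_prefix_mono {τ : A → List A} {a : A} (hp : Prolongable τ a)
    {m n : ℕ} (h : m ≤ n) : substIter τ m a <+: substIter τ n a := by
  induction n, h using Nat.le_induction with
  | base => exact List.prefix_refl _
  | succ n hmn ih => exact ih.trans (substIter_prefix_succ hp n)

lemma occursAt_substIter {τ : A → List A} {a : A} (hp : Prolongable τ a) (n : ℕ) :
    OccursAt (fixedPoint τ a) (substIter τ n a) 0 := by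
  rw [occursAt_iff]
  intro j hj
  rw [Nat.zero_add]
  have hex : ∃ m, j < (substIter τ m a).length := ⟨n, hj⟩
  rw [fixedPoint, dif_pos hex]
  rw [List.get_eq_getElem]
  rcases le_total (Nat.find hex) n with h | h
  · exact ((substIter_prefix_mono hp h).getElem (Nat.find_spec hex)).symm
  · exact ((substIter_prefix_mono hp h).getElem hj)

lemma occursAt_of_infix {x : ℕ → A} {u w : List A} {i : ℕ}
    (h : OccursAt x u i) (hw : w <:+: u) : IsFactor x w := by
  obtain ⟨s, t, hst⟩ := hw
  refine ⟨i + s.length, occursAt_iff.mpr fun j hj => ?_⟩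
  have hju : s.length + j < u.length := by
    rw [← hst]; simp only [List.length_append]; omega
  have h1 : u[s.length + j] = x (i + (s.length + j)) := occursAt_iff.mp h _ hju
  have h2 : u[s.length + j]'hju = w[j] := by
    subst hst
    rw [List.getElem_append_left (by simp only [List.length_append]; omega)]
    rw [List.getElem_append_right (by omega)]
    congr 1
    omega
  rw [← h2, h1]
  ring_nf

lemma isFactor_of_infix {x : ℕ → A} {u w : List A}
    (h : IsFactor x u) (hw : w <:+: u) : IsFactor x w := by
  obtain ⟨i, hi⟩ := h
  exact occursAt_of_infix hi hw

lemma isFactor_substIter {τ : A → List A} {a : A} (hp : Prolongable τ a)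
    {w : List A} {n : ℕ} (hw : w <:+: substIter τ n a) :
    IsFactor (fixedPoint τ a) w :=
  occursAt_of_infix (occursAt_substIter hp n) hw

lemma exists_substIter_infix {τ : A → List A} {a : A} (hp : Prolongable τ a)
    {w : List A} (hf : IsFactor (fixedPoint τ a) w) (k : ℕ) :
    ∃ N, k ≤ N ∧ w <:+: substIter τ N a := by
  obtain ⟨i, hi⟩ := hf
  have := hp.2.2
  have hev := this.eventually_ge_atTop (i + w.length)
  obtain ⟨N₀, hN₀⟩ := hev.exists_forall_of_atTop
  refine ⟨max k N₀, le_max_left _ _, ?_⟩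
  set N := max k N₀
  have hlen : i + w.length ≤ (substIter τ N a).length := hN₀ N (le_max_right _ _)
  have hocc := occursAt_substIter hp N
  have hw : w = ((substIter τ N a).drop i).take w.length := by
    apply List.ext_getElem
    · simp; omega
    · intro j h1 h2
      rw [List.getElem_take, List.getElem_drop]
      have hj : i + j < (substIter τ N a).length := by omega
      rw [occursAt_iff.mp hocc (i + j) hj]
      rw [occursAt_iff.mp hi j h1]
      simp
  rw [hw]
  exact ((List.take_prefix _ _).isInfix).trans ((List.drop_suffix _ _).isInfix)

lemma span_lemma {g : A → List A} {w u : List A}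
    (h : w <:+: substWord g u) :
    ∃ u', u' <:+: u ∧ w <:+: substWord g u' ∧ u'.length ≤ u'.tail.dropLast.length + 2 ∧
      ∀ c ∈ u'.tail.dropLast, (g c).length < w.length := by
  have hP : ∃ m : ℕ, ∃ u' : List A, u'.length = m ∧ u' <:+: u ∧ w <:+: substWord g u' :=
    ⟨u.length, u, rfl, List.infix_refl u, h⟩
  obtain ⟨u', hlen, hinf, hwin⟩ := Nat.find_spec hP
  refine ⟨u', hinf, hwin, ?_, ?_⟩
  · rcases u' with _ | ⟨c0, rest⟩
    · simp
    · simp [List.length_dropLast]; omega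
  rcases u' with _ | ⟨c0, rest⟩
  · simp
  rcases eq_or_ne rest [] with rfl | hrest
  · simp
  -- u' = c0 :: mid ++ [c1]
  obtain ⟨mid, c1, hmc⟩ : ∃ mid c1, rest = mid ++ [c1] :=
    ⟨rest.dropLast, rest.getLast hrest, (List.dropLast_concat_getLast hrest).symm⟩
  have hmid : (c0 :: rest).tail.dropLast = mid := by
    simp [hmc]
  rw [hmid]
  obtain ⟨s, t, hst⟩ := hwin
  -- minimality: s is shorter than g c0
  have hmin := fun m (hm : m < Nat.find hP) => Nat.find_min hP hm
  have hm0 : Nat.find hP = rest.length + 1 := by rw [← hlen]; simp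
  have hs : s.length < (g c0).length := by
    by_contra hsc
    push_neg at hsc
    have hpre1 : g c0 <+: substWord g (c0 :: rest) := by
      rw [substWord_cons]; exact ⟨_, rfl⟩
    have hpre2 : s <+: substWord g (c0 :: rest) := ⟨w ++ t, by rw [← hst]; simp⟩
    obtain ⟨s', hs'⟩ := List.prefix_of_prefix_length_le hpre1 hpre2 hsc
    have : s' ++ w ++ t = substWord g rest := by
      have := hst
      rw [← hs', substWord_cons] at this
      simpa using this
    exact hmin rest.length (by omega) ⟨rest, rfl,
      ((List.tail_suffix (c0 :: rest)).isInfix).trans hinf, ⟨s', t, this⟩⟩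
  have ht : t.length < (g c1).length := by
    by_contra htc
    push_neg at htc
    have hdecomp : substWord g (c0 :: rest) = substWord g (c0 :: mid) ++ g c1 := by
      rw [hmc]
      rw [show c0 :: (mid ++ [c1]) = (c0 :: mid) ++ [c1] by simp]
      rw [substWord_append]
      simp [substWord_cons, substWord_nil]
    have hsuf1 : g c1 <:+ substWord g (c0 :: rest) := by rw [hdecomp]; exact ⟨_, rfl⟩
    have hsuf2 : t <:+ substWord g (c0 :: rest) := ⟨s ++ w, by rw [← hst]⟩
    obtain ⟨t', ht'⟩ := List.suffix_of_suffix_length_le hsuf1 hsuf2 htc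
    have : s ++ w ++ t' = substWord g (c0 :: mid) := by
      have h2 := hst
      rw [← ht', hdecomp] at h2
      have : (s ++ w ++ t') ++ g c1 = substWord g (c0 :: mid) ++ g c1 := by
        simpa using h2
      exact List.append_cancel_right this
    refine hmin (c0 :: mid).length (by simp only [hm0, hmc, List.length_cons, List.length_append, List.length_singleton]; omega) ⟨c0 :: mid, rfl, ?_,
      ⟨s, t', this⟩⟩
    have : c0 :: mid <+: c0 :: rest := by
      rw [hmc]; exact ⟨[c1], by simp⟩
    exact this.isInfix.trans hinf
  -- midsum < |w|
  have hlen1 : (substWord g (c0 :: rest)).length = s.length + w.length + t.length := by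
    rw [← hst]; simp only [List.length_append]
  have hlen2 : (substWord g (c0 :: rest)).length
      = (g c0).length + (mid.map fun c => (g c).length).sum + (g c1).length := by
    rw [hmc, show c0 :: (mid ++ [c1]) = (c0 :: mid) ++ [c1] by simp, substWord_append,
      substWord_cons, substWord_cons, substWord_nil]
    simp [substWord_length]
    omega
  have hmidsum : (mid.map fun c => (g c).length).sum < w.length := by omega
  intro c hc
  have : (g c).length ≤ (mid.map fun c => (g c).length).sum :=
    List.single_le_sum (fun x _ => Nat.zero_le x) _ (List.mem_map_of_mem hc)
  omega

end AuxLemmas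

/-- Lemma: if a substitution `τ` with fixed point `x = τ^ω(a)` is quasi-uniform on its
growing letters and tame (only finitely many factors over bounded letters occur in the
iterates `τ^n(c)`), then `x` has linear factor complexity. -/
theorem stmt18 {A : Type*} [Fintype A] (τ : A → List A) (a : A)
    (hprol : Prolongable τ a)
    (Cq : ℝ) (hCq : 0 < Cq)
    (hquasi : ∀ n : ℕ, 1 ≤ n → ∀ b b' : A, ¬ BoundedLetter τ b → ¬ BoundedLetter τ b' →
      ((substIter τ n b).length : ℝ) ≤ Cq * ((substIter τ n b').length : ℝ))
    (htame : {w : List A | (∀ b ∈ w, BoundedLetter τ b) ∧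
      ∃ n, 1 ≤ n ∧ ∃ d : A, w <:+: substIter τ n d}.Finite) :
    ∃ D : ℝ, 0 < D ∧ ∀ n : ℕ,
      (complexity (fixedPoint τ a) n : ℝ) ≤ D * (n : ℝ) + D := by
  classical
  set x := fixedPoint τ a with hxdef
  have hτne : ∀ b, τ b ≠ [] := hprol.2.1
  have htend := hprol.2.2
  -- `a` is a growing letter
  have ha : ¬ BoundedLetter τ a := by
    rintro ⟨Ma, hMa⟩
    obtain ⟨n, hn⟩ := (htend.eventually_gt_atTop Ma).exists
    exact absurd (hMa n) (by omega)
  -- bound `M` on the length of bounded-letter factors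
  obtain ⟨M, hM⟩ : ∃ M, ∀ w ∈ {w : List A | (∀ b ∈ w, BoundedLetter τ b) ∧
      ∃ n, 1 ≤ n ∧ ∃ d : A, w <:+: substIter τ n d}, w.length ≤ M := by
    obtain ⟨M, hMmem⟩ := (htame.image List.length).bddAbove
    exact ⟨M, fun w hw => hMmem ⟨w, hw, rfl⟩⟩
  have hMfac : ∀ w : List A, IsFactor x w → (∀ b ∈ w, BoundedLetter τ b) →
      w.length ≤ M := by
    intro w hw hb
    obtain ⟨N, hN1, hNinf⟩ := exists_substIter_infix hprol hw 1
    exact hM w ⟨hb, N, hN1, a, hNinf⟩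
  -- uniform bound `Mb` on the iterates of bounded letters
  set Mb : ℕ := Finset.univ.sup fun c => if h : BoundedLetter τ c then h.choose else 0
    with hMbdef
  have hMb : ∀ c, BoundedLetter τ c → ∀ n, (substIter τ n c).length ≤ Mb := by
    intro c hc n
    refine le_trans (hc.choose_spec n) ?_
    have h : (if h : BoundedLetter τ c then h.choose else 0) ≤ Mb :=
      Finset.le_sup (f := fun c => if h : BoundedLetter τ c then h.choose else 0)
        (Finset.mem_univ c)
    rwa [dif_pos hc] at h
  -- bound `L` on the lengths `|τ c|`
  set L : ℕ := Finset.univ.sup fun c => (τ c).length with hLdef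
  have hLc : ∀ c, (τ c).length ≤ L := fun c =>
    Finset.le_sup (f := fun c => (τ c).length) (Finset.mem_univ c)
  have hL1 : 1 ≤ L := le_trans (List.length_pos_iff.mpr (hτne a)) (hLc a)
  -- natural version of the quasi-uniformity constant
  set Cq' : ℕ := ⌈Cq⌉₊ with hCq'def
  have hCq'1 : 1 ≤ Cq' := Nat.one_le_iff_ne_zero.mpr (Nat.ceil_pos.mpr hCq).ne'
  have hquasiN : ∀ n : ℕ, 1 ≤ n → ∀ b b' : A, ¬ BoundedLetter τ b → ¬ BoundedLetter τ b' →
      (substIter τ n b).length ≤ Cq' * (substIter τ n b').length := by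
    intro n hn b b' hb hb'
    have h1 := hquasi n hn b b' hb hb'
    have h2 : (Cq : ℝ) ≤ (Cq' : ℝ) := Nat.le_ceil Cq
    have h3 : ((substIter τ n b).length : ℝ) ≤ (Cq' : ℝ) * (substIter τ n b').length := by
      refine h1.trans (mul_le_mul_of_nonneg_right h2 (by positivity))
    exact_mod_cast h3
  -- choice of the level `k` adapted to the length `n`
  have hsel : ∀ n : ℕ, 1 ≤ n → ∃ k, 1 ≤ k ∧
      (∀ b, ¬ BoundedLetter τ b → n ≤ (substIter τ k b).length) ∧
      (∀ c, (substIter τ k c).length ≤ L * (Cq' * n + Mb)) := by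
    intro n hn
    have hex : ∃ k, 1 ≤ k ∧ ∀ b, ¬ BoundedLetter τ b → n ≤ (substIter τ k b).length := by
      obtain ⟨k0, hk0⟩ := (htend.eventually_ge_atTop (Cq' * n)).exists_forall_of_atTop
      refine ⟨max 1 k0, le_max_left _ _, fun b hb => ?_⟩
      set k := max 1 k0
      have h1 : Cq' * n ≤ (substIter τ k a).length := hk0 k (le_max_right _ _)
      have h2 := hquasiN k (le_max_left _ _) a b ha hb
      have : Cq' * n ≤ Cq' * (substIter τ k b).length := le_trans h1 h2
      exact Nat.le_of_mul_le_mul_left this (by omega)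
    set k := Nat.find hex with hkdef
    obtain ⟨hk1, hkgrow⟩ := Nat.find_spec hex
    refine ⟨k, hk1, hkgrow, ?_⟩
    -- uniform upper bound on `|σ^k c|`
    have hstep : ∀ d, (substIter τ (k - 1) d).length ≤ Cq' * n + Mb := by
      intro d
      by_cases hd : BoundedLetter τ d
      · exact le_trans (hMb d hd _) (Nat.le_add_left _ _)
      · rcases eq_or_lt_of_le hk1 with h1 | h2
        · have hk0 : k - 1 = 0 := by omega
          rw [hk0, substIter_zero]
          have h1' : 1 ≤ Cq' * n := Nat.one_le_iff_ne_zero.mpr (by positivity)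
          simp only [List.length_singleton]
          omega
        · -- k ≥ 2 : use minimality at k - 1
          have hkm1 : ¬ (1 ≤ k - 1 ∧ ∀ b, ¬ BoundedLetter τ b →
              n ≤ (substIter τ (k - 1) b).length) := Nat.find_min hex (by omega)
          push_neg at hkm1
          obtain ⟨b0, hb0, hb0lt⟩ := hkm1 (by omega)
          have hq := hquasiN (k - 1) (by omega) d b0 hd hb0
          calc (substIter τ (k - 1) d).length ≤ Cq' * (substIter τ (k - 1) b0).length := hq
            _ ≤ Cq' * n := Nat.mul_le_mul_left _ (by omega)
            _ ≤ Cq' * n + Mb := Nat.le_add_right _ _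
    intro c
    have hk' : k = (k - 1) + 1 := by omega
    have : substIter τ k c = substWord (substIter τ (k - 1)) (τ c) := by
      rw [hk']; rfl
    rw [this, substWord_length]
    calc ((τ c).map fun d => (substIter τ (k - 1) d).length).sum
        ≤ ((τ c).map fun d => (substIter τ (k - 1) d).length).length • (Cq' * n + Mb) :=
          List.sum_le_card_nsmul _ _ (by
            intro v hv
            obtain ⟨d, _, rfl⟩ := List.mem_map.mp hv
            exact hstep d)
      _ = (τ c).length * (Cq' * n + Mb) := by simp [smul_eq_mul]
      _ ≤ L * (Cq' * n + Mb) := Nat.mul_le_mul_right _ (hLc c)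
  -- the finite set of candidate words `u'`
  have hfin : {l : List A | l.length ≤ M + 2}.Finite := List.finite_length_le A (M + 2)
  set CA : ℕ := hfin.toFinset.card with hCAdef
  set Bn : ℕ → ℕ := fun n => L * (Cq' * n + Mb) with hBndef
  -- key counting estimate
  have key : ∀ n : ℕ, 1 ≤ n → complexity x n ≤ CA * ((M + 2) * Bn n + 1) := by
    intro n hn
    obtain ⟨k, hk1, hkgrow, hkbound⟩ := hsel n hn
    set T : Finset (List A × ℕ) := hfin.toFinset ×ˢ Finset.Iic ((M + 2) * Bn n) with hTdef
    set f : List A × ℕ → List A := fun q => ((substWord (substIter τ k) q.1).drop q.2).take n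
      with hfdef
    have hsub : {w : List A | w.length = n ∧ IsFactor x w} ⊆ ↑(T.image f) := by
      rintro w ⟨hwlen, hwfac⟩
      obtain ⟨N, hNk, hNinf⟩ := exists_substIter_infix hprol hwfac k
      have hcomp : substIter τ N a = substWord (substIter τ k) (substIter τ (N - k) a) := by
        rw [← substIter_add τ (N - k) k a, Nat.sub_add_cancel hNk]
      rw [hcomp] at hNinf
      obtain ⟨u', hu'inf, hwin, hu'len, hu'mid⟩ := span_lemma hNinf
      -- interior letters are bounded
      have hmidb : ∀ c ∈ u'.tail.dropLast, BoundedLetter τ c := by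
        intro c hc
        by_contra hcg
        have := hkgrow c hcg
        have := hu'mid c hc
        omega
      -- the interior is a factor of `x`, hence of length ≤ M
      have hmidfac : IsFactor x u'.tail.dropLast := by
        have h1 : u'.tail.dropLast <:+: u' :=
          (List.dropLast_prefix _).isInfix.trans (List.tail_suffix _).isInfix
        exact isFactor_substIter hprol (h1.trans hu'inf)
      have hmidlen : u'.tail.dropLast.length ≤ M := hMfac _ hmidfac hmidb
      have hu'len2 : u'.length ≤ M + 2 := by omega
      -- the image of `u'` is short
      have himglen : (substWord (substIter τ k) u').length ≤ (M + 2) * Bn n := by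
        rw [substWord_length]
        calc (u'.map fun c => (substIter τ k c).length).sum
            ≤ (u'.map fun c => (substIter τ k c).length).length • Bn n :=
              List.sum_le_card_nsmul _ _ (by
                intro v hv
                obtain ⟨d, _, rfl⟩ := List.mem_map.mp hv
                exact hkbound d)
          _ = u'.length * Bn n := by simp [smul_eq_mul]
          _ ≤ (M + 2) * Bn n := Nat.mul_le_mul_right _ hu'len2
      obtain ⟨s, t, hst⟩ := hwin
      refine Finset.mem_coe.mpr (Finset.mem_image.mpr ⟨(u', s.length), ?_, ?_⟩)
      · refine Finset.mem_product.mpr ⟨?_, ?_⟩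
        · exact hfin.mem_toFinset.mpr hu'len2
        · refine Finset.mem_Iic.mpr ?_
          have : s.length ≤ (substWord (substIter τ k) u').length := by
            rw [← hst]; simp only [List.length_append]; omega
          omega
      · show ((substWord (substIter τ k) u').drop s.length).take n = w
        rw [← hst, show s ++ w ++ t = s ++ (w ++ t) by simp, List.drop_left,
          ← hwlen, List.take_left]
    calc complexity x n ≤ (T.image f).card := by
          rw [complexity, ← Set.ncard_coe_finset]
          exact Set.ncard_le_ncard hsub (Finset.finite_toSet _)
      _ ≤ T.card := Finset.card_image_le
      _ = CA * ((M + 2) * Bn n + 1) := by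
          rw [hTdef, Finset.card_product, Nat.card_Iic]
  -- assemble the final constant
  set Dn : ℕ := CA * ((M + 2) * (L * (Cq' + Mb)) + 1) + 1 with hDndef
  refine ⟨(Dn : ℝ), by positivity, fun n => ?_⟩
  rcases Nat.eq_zero_or_pos n with rfl | hn
  · -- n = 0 : the only factor of length 0 is []
    have h0 : {w : List A | w.length = 0 ∧ IsFactor x w} = {([] : List A)} := by
      ext w
      simp only [Set.mem_setOf_eq, Set.mem_singleton_iff, List.length_eq_zero_iff]
      constructor
      · rintro ⟨h, _⟩; exact h
      · rintro rfl
        exact ⟨rfl, ⟨0, by simp [OccursAt]⟩⟩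
    have : complexity x 0 = 1 := by rw [complexity, h0, Set.ncard_singleton]
    rw [this]
    have h1 : (1 : ℝ) ≤ (Dn : ℝ) := by
      exact_mod_cast Nat.one_le_iff_ne_zero.mpr (by positivity)
    simp only [Nat.cast_one, Nat.cast_zero, mul_zero, zero_add]
    exact h1
  · have hkey := key n hn
    have hnat : CA * ((M + 2) * Bn n + 1) ≤ Dn * n := by
      have hBn : Bn n ≤ L * (Cq' + Mb) * n := by
        rw [hBndef]
        simp only []
        calc L * (Cq' * n + Mb) ≤ L * (Cq' * n + Mb * n) := by
              refine Nat.mul_le_mul_left _ (Nat.add_le_add_left ?_ _)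
              exact Nat.le_mul_of_pos_right _ hn
          _ = L * (Cq' + Mb) * n := by ring
      calc CA * ((M + 2) * Bn n + 1)
          ≤ CA * ((M + 2) * (L * (Cq' + Mb) * n) + 1 * n) := by
            refine Nat.mul_le_mul_left _ (Nat.add_le_add ?_ ?_)
            · exact Nat.mul_le_mul_left _ hBn
            · omega
        _ = (CA * ((M + 2) * (L * (Cq' + Mb)) + 1)) * n := by ring
        _ ≤ Dn * n := Nat.mul_le_mul_right _ (by omega)
    have hle : (complexity x n : ℝ) ≤ (Dn : ℝ) * n := by
      have := hkey.trans hnat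
      exact_mod_cast this
    have hD0 : (0 : ℝ) ≤ (Dn : ℝ) := by positivity
    linarith
end

section
/- Let τ : A → A* be a substitution on a finite alphabet A, prolongable on a letter a, and let x = τ^ω(a) be its fixed point. If x is factor-balanced, then x has linear factor complexity, i.e., there exists D > 0 such that p_x(n) ≤ D·n + D for all n ≥ 0. -/
open scoped Classical

section Aux
open List

namespace S19

variable {A : Type*}

/-! ### substWord / substIter basics -/

theorem substWord_nil (τ : A → List A) : substWord τ [] = [] := rfl

theorem substWord_cons (τ : A → List A) (b : A) (w : List A) :
    substWord τ (b :: w) = τ b ++ substWord τ w := by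
  simp [substWord]

theorem substWord_singleton (τ : A → List A) (b : A) : substWord τ [b] = τ b := by
  simp [substWord]

theorem substWord_append (τ : A → List A) (u v : List A) :
    substWord τ (u ++ v) = substWord τ u ++ substWord τ v := by
  simp [substWord]

theorem substWord_congr {τ σ : A → List A} (h : ∀ b, τ b = σ b) (w : List A) :
    substWord τ w = substWord σ w := by
  induction w with
  | nil => rfl
  | cons c w ih => rw [substWord_cons, substWord_cons, h, ih]

theorem substWord_substWord (τ σ : A → List A) (w : List A) :
    substWord τ (substWord σ w) = substWord (fun b => substWord τ (σ b)) w := by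
  induction w with
  | nil => rfl
  | cons c w ih => rw [substWord_cons, substWord_cons, substWord_append, ih]

theorem length_substWord (τ : A → List A) (w : List A) :
    (substWord τ w).length = (w.map fun b => (τ b).length).sum := by
  induction w with
  | nil => rfl
  | cons c w ih => rw [substWord_cons]; simp [ih]

theorem substWord_prefix (τ : A → List A) {u v : List A} (h : u <+: v) :
    substWord τ u <+: substWord τ v := by
  obtain ⟨t, rfl⟩ := h
  exact ⟨substWord τ t, (substWord_append τ u t).symm⟩

variable (τ : A → List A)

theorem substIter_zero (b : A) : substIter τ 0 b = [b] := rfl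

theorem substIter_succ (n : ℕ) (b : A) :
    substIter τ (n + 1) b = substWord (substIter τ n) (τ b) := rfl

theorem substWord_substIter_zero (w : List A) : substWord (substIter τ 0) w = w := by
  induction w with
  | nil => rfl
  | cons c w ih => rw [substWord_cons, ih]; rfl

theorem substIter_one (b : A) : substIter τ 1 b = τ b := by
  rw [substIter_succ]; exact substWord_substIter_zero τ (τ b)

theorem substIter_add (k m : ℕ) (b : A) :
    substIter τ (k + m) b = substWord (substIter τ k) (substIter τ m b) := by
  induction m generalizing b with
  | zero => rw [Nat.add_zero, substIter_zero, substWord_singleton]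
  | succ m ih =>
      rw [show k + (m+1) = (k+m) + 1 from rfl, substIter_succ, substIter_succ,
        substWord_substWord]
      exact substWord_congr (fun e => ih e) (τ b)

theorem substIter_succ' (n : ℕ) (b : A) :
    substIter τ (n + 1) b = substWord τ (substIter τ n b) := by
  have h1 : substIter τ (1 + n) b = substWord (substIter τ 1) (substIter τ n b) :=
    substIter_add τ 1 n b
  rw [Nat.add_comm 1 n] at h1
  rw [h1]
  exact substWord_congr (fun e => substIter_one τ e) _

theorem substIter_ne_nil (hne : ∀ b, τ b ≠ []) (n : ℕ) (b : A) :
    substIter τ n b ≠ [] := by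
  induction n generalizing b with
  | zero => simp [substIter_zero]
  | succ n ih =>
      rw [substIter_succ]
      obtain ⟨c, w, hw⟩ := List.exists_cons_of_ne_nil (hne b)
      rw [hw, substWord_cons]
      intro h
      exact ih c (List.append_eq_nil_iff.mp h).1

theorem one_le_length_substIter (hne : ∀ b, τ b ≠ []) (n : ℕ) (b : A) :
    1 ≤ (substIter τ n b).length :=
  List.length_pos_iff.mpr (substIter_ne_nil τ hne n b)

theorem length_substIter_mono (hne : ∀ b, τ b ≠ []) (n : ℕ) (b : A) :
    (substIter τ n b).length ≤ (substIter τ (n+1) b).length := by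
  rw [substIter_succ' τ n b, length_substWord]
  calc (substIter τ n b).length
      = ((substIter τ n b).map fun _ => 1).sum := by simp
    _ ≤ _ := by
        apply List.sum_le_sum
        intro e _
        exact List.length_pos_iff.mpr (hne e)

end S19
end Aux
namespace S19
open List

variable {A : Type*}

/-! ### segments of an infinite word -/

/-- The factor of `x` of length `n` starting at position `i`. -/
def seg (x : ℕ → A) (i n : ℕ) : List A := (List.range n).map fun j => x (i + j)

theorem length_seg (x : ℕ → A) (i n : ℕ) : (seg x i n).length = n := by
  simp [seg]

theorem seg_zero (x : ℕ → A) (n : ℕ) : seg x 0 n = wordPrefix x n := by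
  simp [seg, wordPrefix]

theorem occursAt_seg (x : ℕ → A) (i n : ℕ) : OccursAt x (seg x i n) i := by
  unfold OccursAt
  rw [length_seg]
  rfl

theorem isFactor_seg (x : ℕ → A) (i n : ℕ) : IsFactor x (seg x i n) :=
  ⟨i, occursAt_seg x i n⟩

theorem occursAt_iff_seg (x : ℕ → A) (w : List A) (i : ℕ) :
    OccursAt x w i ↔ w = seg x i w.length := by
  unfold OccursAt seg
  constructor <;> (intro h; rw [← h])

theorem isFactor_iff_seg (x : ℕ → A) (w : List A) :
    IsFactor x w ↔ ∃ i, w = seg x i w.length := by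
  unfold IsFactor
  exact exists_congr fun i => occursAt_iff_seg x w i

theorem seg_append (x : ℕ → A) (i n m : ℕ) :
    seg x i n ++ seg x (i + n) m = seg x i (n + m) := by
  unfold seg
  rw [List.range_add, List.map_append, List.map_map]
  congr 1
  apply List.map_congr_left
  intro j _
  simp [Function.comp]
  ring_nf

theorem seg_take (x : ℕ → A) (i n m : ℕ) (h : m ≤ n) :
    (seg x i n).take m = seg x i m := by
  have := seg_append x i m (n - m)
  rw [Nat.add_sub_cancel' h] at this
  rw [← this, List.take_left' (length_seg x i m)]

theorem seg_drop (x : ℕ → A) (i n m : ℕ) (h : m ≤ n) :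
    (seg x i n).drop m = seg x (i + m) (n - m) := by
  have := seg_append x i m (n - m)
  rw [Nat.add_sub_cancel' h] at this
  rw [← this, List.drop_left' (length_seg x i m)]

theorem wordPrefix_succ (x : ℕ → A) (n : ℕ) :
    wordPrefix x (n + 1) = wordPrefix x n ++ [x n] := by
  unfold wordPrefix
  rw [List.range_succ, List.map_append]
  rfl

theorem wordPrefix_add (x : ℕ → A) (n m : ℕ) :
    wordPrefix x (n + m) = wordPrefix x n ++ seg x n m := by
  rw [← seg_zero, ← seg_zero]
  have := seg_append x 0 n m
  rw [Nat.zero_add] at this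
  rw [this]

theorem length_wordPrefix (x : ℕ → A) (n : ℕ) : (wordPrefix x n).length = n := by
  simp [wordPrefix]

theorem wordPrefix_prefix (x : ℕ → A) {n m : ℕ} (h : n ≤ m) :
    wordPrefix x n <+: wordPrefix x m := by
  obtain ⟨d, rfl⟩ := Nat.exists_eq_add_of_le h
  rw [wordPrefix_add]
  exact List.prefix_append _ _

theorem eq_wordPrefix_of_prefix {x : ℕ → A} {u : List A} {m : ℕ}
    (h : u <+: wordPrefix x m) : u = wordPrefix x u.length := by
  have hl : u.length ≤ m := by
    have := h.length_le
    rwa [length_wordPrefix] at this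
  have h2 : (wordPrefix x m).take u.length = wordPrefix x u.length := by
    rw [← seg_zero, ← seg_zero]
    exact seg_take x 0 m u.length hl
  rw [← h2]
  exact List.prefix_iff_eq_take.mp h

/-- A factor of a factor (a sub-segment) is a factor. -/
theorem seg_sub (x : ℕ → A) (i n i' n' : ℕ) (h1 : i ≤ i') (h2 : i' + n' ≤ i + n) :
    ∃ s, ((seg x i n).drop s).take n' = seg x i' n' := by
  refine ⟨i' - i, ?_⟩
  rw [seg_drop x i n (i' - i) (by omega), Nat.add_sub_cancel' h1,
    seg_take x i' (n - (i' - i)) n' (by omega)]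

end S19
namespace S19
open List

variable {A : Type*} {τ : A → List A} {a : A}

/-! ### The fixed point: prefix coherence -/

theorem substIter_prefix_succ (hh : (τ a).head? = some a) (n : ℕ) :
    substIter τ n a <+: substIter τ (n + 1) a := by
  obtain ⟨s, hs⟩ : ∃ s, τ a = a :: s := by
    cases h : τ a with
    | nil => rw [h] at hh; simp at hh
    | cons c s => rw [h] at hh; simp at hh; exact ⟨s, by rw [hh]⟩
  rw [substIter_succ, hs, substWord_cons]
  exact ⟨substWord (substIter τ n) s, rfl⟩

theorem substIter_prefix_mono (hh : (τ a).head? = some a) {n m : ℕ} (h : n ≤ m) :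
    substIter τ n a <+: substIter τ m a := by
  induction m with
  | zero => rw [Nat.le_zero.mp h]
  | succ m ih =>
      rcases Nat.lt_or_ge n (m+1) with h' | h'
      · exact (ih (by omega)).trans (substIter_prefix_succ hh m)
      · rw [Nat.le_antisymm h h']

theorem fixedPoint_get (hh : (τ a).head? = some a) {n j : ℕ}
    (hj : j < (substIter τ n a).length) :
    fixedPoint τ a j = (substIter τ n a).get ⟨j, hj⟩ := by
  unfold fixedPoint
  have hex : ∃ m, j < (substIter τ m a).length := ⟨n, hj⟩
  rw [dif_pos hex]
  have hfind := Nat.find_spec hex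
  set m := Nat.find hex with hm
  simp only [List.get_eq_getElem]
  rcases le_or_gt m n with h | h
  · exact (substIter_prefix_mono hh h).getElem _
  · exact ((substIter_prefix_mono hh (Nat.le_of_lt h)).getElem _).symm

theorem substIter_eq_wordPrefix (hh : (τ a).head? = some a) (n : ℕ) :
    substIter τ n a = wordPrefix (fixedPoint τ a) (substIter τ n a).length := by
  apply List.ext_getElem
  · rw [length_wordPrefix]
  · intro j h1 h2
    simp only [wordPrefix]
    rw [List.getElem_map, List.getElem_range]
    rw [fixedPoint_get hh h1]
    rfl

theorem wordPrefix_fixedPoint_prefix (hh : (τ a).head? = some a) {m n : ℕ}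
    (h : m ≤ (substIter τ n a).length) :
    wordPrefix (fixedPoint τ a) m <+: substIter τ n a := by
  conv_rhs => rw [substIter_eq_wordPrefix hh n]
  exact wordPrefix_prefix _ h

end S19
namespace S19
open List

variable {A : Type*} {τ : A → List A} {a : A}

/-! ### The scale functions `TT` -/

/-- Length of the image of the length-`m` prefix of the fixed point under `τ^k`. -/
noncomputable def TT (τ : A → List A) (a : A) (k m : ℕ) : ℕ :=
  (substWord (substIter τ k) (wordPrefix (fixedPoint τ a) m)).length

theorem TT_zero (k : ℕ) : TT τ a k 0 = 0 := rfl

theorem TT_succ (k m : ℕ) :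
    TT τ a k (m + 1) = TT τ a k m + (substIter τ k (fixedPoint τ a m)).length := by
  unfold TT
  rw [wordPrefix_succ, substWord_append, List.length_append, substWord_singleton]

theorem TT_lt_succ (hne : ∀ b, τ b ≠ []) (k m : ℕ) : TT τ a k m < TT τ a k (m + 1) := by
  rw [TT_succ]
  have := one_le_length_substIter τ hne k (fixedPoint τ a m)
  omega

theorem TT_mono (hne : ∀ b, τ b ≠ []) (k : ℕ) {m m' : ℕ} (h : m ≤ m') :
    TT τ a k m ≤ TT τ a k m' := by
  induction m' with
  | zero => rw [Nat.le_zero.mp h]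
  | succ m' ih =>
      rcases Nat.lt_or_ge m (m'+1) with h' | h'
      · exact (ih (by omega)).trans (TT_lt_succ hne k m').le
      · rw [Nat.le_antisymm h h']

theorem TT_strict_mono (hne : ∀ b, τ b ≠ []) (k : ℕ) {m m' : ℕ} (h : m < m') :
    TT τ a k m < TT τ a k m' :=
  lt_of_lt_of_le (TT_lt_succ hne k m) (TT_mono hne k h)

theorem le_TT (hne : ∀ b, τ b ≠ []) (k m : ℕ) : m ≤ TT τ a k m := by
  induction m with
  | zero => exact Nat.zero_le _
  | succ m ih => exact lt_of_le_of_lt ih (TT_lt_succ hne k m)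

theorem exists_block (hne : ∀ b, τ b ≠ []) (k i : ℕ) :
    ∃ j, TT τ a k j ≤ i ∧ i < TT τ a k (j + 1) := by
  have hex : ∃ m, i < TT τ a k m := ⟨i + 1, lt_of_lt_of_le (Nat.lt_succ_self i) (le_TT hne k (i+1))⟩
  have hspec := Nat.find_spec hex
  have hne0 : Nat.find hex ≠ 0 := by
    intro h0
    rw [h0, TT_zero] at hspec
    omega
  refine ⟨Nat.find hex - 1, ?_, ?_⟩
  · by_contra hcon
    exact Nat.find_min hex (Nat.sub_lt (Nat.pos_of_ne_zero hne0) Nat.one_pos) (by omega)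
  · have : Nat.find hex - 1 + 1 = Nat.find hex := Nat.succ_pred_eq_of_pos (Nat.pos_of_ne_zero hne0)
    rw [this]
    exact hspec

/-! ### Images of prefixes and segments are prefixes / segments -/

theorem SI_wordPrefix (hh : (τ a).head? = some a)
    (htend : Filter.Tendsto (fun n => (substIter τ n a).length) Filter.atTop Filter.atTop)
    (k m : ℕ) :
    substWord (substIter τ k) (wordPrefix (fixedPoint τ a) m)
      = wordPrefix (fixedPoint τ a) (TT τ a k m) := by
  obtain ⟨n, hn⟩ : ∃ n, m ≤ (substIter τ n a).length := (htend.eventually_ge_atTop m).exists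
  have h1 : wordPrefix (fixedPoint τ a) m <+: substIter τ n a :=
    wordPrefix_fixedPoint_prefix hh hn
  have h2 := substWord_prefix (substIter τ k) h1
  rw [← substIter_add] at h2
  rw [substIter_eq_wordPrefix hh (k+n)] at h2
  exact eq_wordPrefix_of_prefix h2

theorem SI_seg (hh : (τ a).head? = some a) (hne : ∀ b, τ b ≠ [])
    (htend : Filter.Tendsto (fun n => (substIter τ n a).length) Filter.atTop Filter.atTop)
    (k i len : ℕ) :
    substWord (substIter τ k) (seg (fixedPoint τ a) i len)
      = seg (fixedPoint τ a) (TT τ a k i) (TT τ a k (i + len) - TT τ a k i) := by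
  have hsplit : wordPrefix (fixedPoint τ a) (i + len)
      = wordPrefix (fixedPoint τ a) i ++ seg (fixedPoint τ a) i len := wordPrefix_add _ i len
  have h2 := congrArg (substWord (substIter τ k)) hsplit
  rw [substWord_append, SI_wordPrefix hh htend, SI_wordPrefix hh htend] at h2
  have h3 : seg (fixedPoint τ a) 0 (TT τ a k (i+len))
      = seg (fixedPoint τ a) 0 (TT τ a k i) ++ substWord (substIter τ k) (seg (fixedPoint τ a) i len) := by
    rw [seg_zero, seg_zero]; exact h2
  have h4 := congrArg (fun l => l.drop (TT τ a k i)) h3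
  rw [List.drop_left' ((length_seg _ _ _).trans rfl)] at h4
  rw [← h4, seg_drop _ 0 _ _ (TT_mono hne k (Nat.le_add_right i len))]
  rw [Nat.zero_add]

theorem length_SI_seg (hh : (τ a).head? = some a) (hne : ∀ b, τ b ≠ [])
    (htend : Filter.Tendsto (fun n => (substIter τ n a).length) Filter.atTop Filter.atTop)
    (k i len : ℕ) :
    (substWord (substIter τ k) (seg (fixedPoint τ a) i len)).length
      = TT τ a k (i + len) - TT τ a k i := by
  rw [SI_seg hh hne htend, length_seg]

/-! ### Letter counts -/

/-- Number of occurrences of the letter `b` in `u`. -/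
noncomputable def cnt (b : A) (u : List A) : ℕ := u.countP (fun e => decide (e = b))

theorem cnt_append (b : A) (u v : List A) : cnt b (u ++ v) = cnt b u + cnt b v :=
  List.countP_append

theorem cnt_le_length (b : A) (u : List A) : cnt b u ≤ u.length :=
  List.countP_le_length

theorem one_le_cnt_of_mem {b : A} {u : List A} (h : b ∈ u) : 1 ≤ cnt b u := by
  unfold cnt
  rw [Nat.one_le_iff_ne_zero, ← Nat.pos_iff_ne_zero, List.countP_pos_iff]
  exact ⟨b, h, by simp⟩

theorem cnt_cons (b c : A) (u : List A) :
    cnt b (c :: u) = cnt b u + if c = b then 1 else 0 := by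
  unfold cnt
  rw [List.countP_cons]
  simp

theorem mem_seg {x : ℕ → A} {i n j : ℕ} (h : j < n) : x (i + j) ∈ seg x i n := by
  unfold seg
  exact List.mem_map.mpr ⟨j, List.mem_range.mpr h, rfl⟩

/-- `|σ(u)| ≥ |u|_g · |σ(g)|`. -/
theorem cnt_mul_le_length_substWord (σ : A → List A) (g : A) (u : List A) :
    cnt g u * (σ g).length ≤ (substWord σ u).length := by
  induction u with
  | nil => simp [cnt, substWord]
  | cons c u ih =>
      rw [substWord_cons, List.length_append, cnt_cons]
      rcases Classical.em (c = g) with h | h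
      · subst h
        rw [if_pos rfl, Nat.add_mul, Nat.one_mul]
        omega
      · rw [if_neg h, Nat.add_zero]
        calc cnt g u * (σ g).length ≤ (substWord σ u).length := ih
          _ ≤ _ := Nat.le_add_left _ _

/-! ### `countOccs` of a single letter -/

theorem singleton_prefix_iff {l : List A} {b : A} : [b] <+: l ↔ l.head? = some b := by
  constructor
  · rintro ⟨t, rfl⟩; rfl
  · intro h
    cases l with
    | nil => simp at h
    | cons c t =>
        simp only [List.head?_cons, Option.some.injEq] at h
        exact ⟨t, by rw [h]; rfl⟩

theorem cnt_eq_card (b : A) (u : List A) :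
    cnt b u = ((Finset.range u.length).filter fun i => u[i]? = some b).card := by
  induction u using List.reverseRecOn with
  | nil => simp [cnt]
  | append_singleton u c ih =>
      rw [cnt_append, List.length_append, List.length_singleton, Finset.range_add_one,
        Finset.filter_insert]
      have hcong : (Finset.range u.length).filter (fun i => (u ++ [c])[i]? = some b)
          = (Finset.range u.length).filter fun i => u[i]? = some b := by
        apply Finset.filter_congr
        intro i hi
        rw [Finset.mem_range] at hi
        rw [List.getElem?_append_left hi]
      have hc : (u ++ [c])[u.length]? = some c := by
        rw [List.getElem?_append_right (le_refl _)]
        simp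
      rcases Classical.em (c = b) with h | h
      · subst h
        rw [if_pos hc, Finset.card_insert_of_notMem (by simp), hcong, ← ih]
        have : cnt c [c] = 1 := by simp [cnt]
        omega
      · rw [if_neg (by rw [hc]; simp only [Option.some.injEq]; exact fun h' => h h'), hcong, ← ih]
        have : cnt b [c] = 0 := by
          unfold cnt
          simp [h]
        omega

theorem countOccs_singleton (u : List A) (b : A) : countOccs u [b] = cnt b u := by
  unfold countOccs
  rw [cnt_eq_card]
  have h1 : (Finset.range (u.length + 1)).filter (fun i => [b] <+: u.drop i)
      = (Finset.range u.length).filter fun i => [b] <+: u.drop i := by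
    rw [Finset.range_add_one, Finset.filter_insert, if_neg]
    rw [singleton_prefix_iff]
    simp
  rw [h1]
  congr 1
  apply Finset.filter_congr
  intro i _
  rw [singleton_prefix_iff, List.head?_drop]

end S19
namespace S19
open List

variable {A : Type*} {τ : A → List A} {a : A}

/-! ### Balancedness: a uniform integral constant for letters -/

theorem balance_nat [Fintype A] (hbal : FactorBalanced (fixedPoint τ a)) :
    ∃ C : ℕ, 1 ≤ C ∧ ∀ (b : A) (u v : List A), IsFactor (fixedPoint τ a) u →
      IsFactor (fixedPoint τ a) v → u.length = v.length →
      cnt b u ≤ cnt b v + C := by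
  have h := fun b : A => hbal [b]
  choose f hf0 hf using h
  refine ⟨(Finset.univ.sup fun b : A => ⌈f b⌉₊) + 1, by omega, ?_⟩
  intro b u v hu hv hlen
  have hb := hf b u v hu hv hlen
  rw [countOccs_singleton, countOccs_singleton] at hb
  have h1 : (cnt b u : ℝ) - cnt b v ≤ f b := (abs_le.mp hb).2
  have h2 : f b ≤ ((Finset.univ.sup fun b : A => ⌈f b⌉₊ : ℕ) : ℝ) := by
    calc f b ≤ (⌈f b⌉₊ : ℝ) := Nat.le_ceil _
      _ ≤ _ := by
          have := Finset.le_sup (f := fun b : A => ⌈f b⌉₊) (Finset.mem_univ b)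
          exact_mod_cast this
  have h3 : (cnt b u : ℝ) ≤ cnt b v + ((Finset.univ.sup fun b : A => ⌈f b⌉₊ : ℕ) : ℝ) + 1 := by
    linarith
  exact_mod_cast h3

/-! ### Letters occurring infinitely often: the gap lemma -/

/-- The letter `b` occurs infinitely often in `x`. -/
def Pinf (x : ℕ → A) (b : A) : Prop := {i | x i = b}.Infinite

theorem cnt_wordPrefix_unbounded {b : A} {x : ℕ → A} (hb : Pinf x b) (t : ℕ) :
    ∃ R, t ≤ cnt b (wordPrefix x R) := by
  induction t with
  | zero => exact ⟨0, Nat.zero_le _⟩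
  | succ t ih =>
      obtain ⟨R, hR⟩ := ih
      obtain ⟨i, hi, hiR⟩ := Set.Infinite.exists_gt hb R
      refine ⟨i + 1, ?_⟩
      have hsplit : wordPrefix x (i+1) = wordPrefix x R ++ seg x R (i + 1 - R) := by
        have := wordPrefix_add x R (i + 1 - R)
        rwa [Nat.add_sub_cancel' (by omega)] at this
      rw [hsplit, cnt_append]
      have hmem : b ∈ seg x R (i + 1 - R) := by
        have : x (R + (i - R)) ∈ seg x R (i + 1 - R) := mem_seg (by omega)
        rwa [show R + (i - R) = i by omega, hi] at this
      have := one_le_cnt_of_mem hmem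
      omega

/-- Gap lemma: a letter occurring infinitely often occurs in every long enough factor. -/
theorem gap_exists {C : ℕ}
    (hC : ∀ (b : A) (u v : List A), IsFactor (fixedPoint τ a) u →
      IsFactor (fixedPoint τ a) v → u.length = v.length → cnt b u ≤ cnt b v + C)
    {b : A} (hb : Pinf (fixedPoint τ a) b) :
    ∃ R, 1 ≤ R ∧ ∀ i len, R ≤ len → 1 ≤ cnt b (seg (fixedPoint τ a) i len) := by
  obtain ⟨R, hR⟩ := cnt_wordPrefix_unbounded hb (C + 1)
  have hR1 : 1 ≤ R := by
    by_contra h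
    have : R = 0 := by omega
    rw [this] at hR
    have := cnt_le_length b (wordPrefix (fixedPoint τ a) 0)
    rw [length_wordPrefix] at this
    omega
  refine ⟨R, hR1, ?_⟩
  intro i len hlen
  have hsplit : seg (fixedPoint τ a) i len
      = seg (fixedPoint τ a) i R ++ seg (fixedPoint τ a) (i + R) (len - R) := by
    have := seg_append (fixedPoint τ a) i R (len - R)
    rw [Nat.add_sub_cancel' hlen] at this
    exact this.symm
  have hbalu := hC b (wordPrefix (fixedPoint τ a) R) (seg (fixedPoint τ a) i R)
    (by rw [← seg_zero]; exact isFactor_seg _ 0 R) (isFactor_seg _ i R)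
    (by rw [length_wordPrefix, length_seg])
  rw [hsplit, cnt_append]
  omega

/-- Iterated gap lemma: `t` occurrences in every factor of length `≥ t·R`. -/
theorem gap_multi {R : ℕ} {b : A} {x : ℕ → A}
    (hgap : ∀ i len, R ≤ len → 1 ≤ cnt b (seg x i len)) :
    ∀ t i len, t * R ≤ len → t ≤ cnt b (seg x i len) := by
  intro t
  induction t with
  | zero => intro i len _; exact Nat.zero_le _
  | succ t ih =>
      intro i len hlen
      have hRlen : R ≤ len := by
        calc R ≤ (t+1) * R := Nat.le_mul_of_pos_left R (by omega)
          _ ≤ len := hlen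
      have hsplit : seg x i len = seg x i R ++ seg x (i + R) (len - R) := by
        have := seg_append x i R (len - R)
        rw [Nat.add_sub_cancel' hRlen] at this
        exact this.symm
      rw [hsplit, cnt_append]
      have h1 := hgap i R (le_refl R)
      have h2 := ih (i + R) (len - R) (by
        have : (t+1) * R = t * R + R := by ring
        omega)
      omega

end S19
namespace S19
open List

variable {A : Type*} {τ : A → List A} {a : A}

/-! ### Bounding complexity via occurrence positions -/

theorem complexity_le_of_occ (x : ℕ → A) (n T : ℕ)
    (h : ∀ w, w.length = n → IsFactor x w → ∃ i, i < T ∧ OccursAt x w i) :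
    complexity x n ≤ T := by
  unfold complexity
  have hsub : {w : List A | w.length = n ∧ IsFactor x w}
      ⊆ (fun i => seg x i n) '' (Set.Iio T) := by
    rintro w ⟨hlen, hfac⟩
    obtain ⟨i, hiT, hocc⟩ := h w hlen hfac
    refine ⟨i, hiT, ?_⟩
    rw [occursAt_iff_seg] at hocc
    show seg x i n = w
    rw [← hlen, ← hocc]
  calc Set.ncard {w : List A | w.length = n ∧ IsFactor x w}
      ≤ Set.ncard ((fun i => seg x i n) '' (Set.Iio T)) :=
        Set.ncard_le_ncard hsub ((Set.finite_Iio T).image _)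
    _ ≤ Set.ncard (Set.Iio T) := Set.ncard_image_le (Set.finite_Iio T)
    _ = T := by
        rw [← Finset.coe_Iio, Set.ncard_coe_finset, Nat.card_Iio]

/-! ### Eventually periodic words -/

theorem occ_lt_of_periodic {x : ℕ → A} {T p : ℕ} (hp : 1 ≤ p)
    (hper : ∀ t, T ≤ t → x (t + p) = x t) (w : List A) (hfac : IsFactor x w) :
    ∃ i, i < T + p ∧ OccursAt x w i := by
  obtain ⟨i, hocc⟩ := hfac
  induction i using Nat.strong_induction_on with
  | _ i ih =>
      rcases Nat.lt_or_ge i (T + p) with h | h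
      · exact ⟨i, h, hocc⟩
      · refine ih (i - p) (by omega) ?_
        rw [occursAt_iff_seg] at hocc ⊢
        have : seg x (i - p) w.length = seg x i w.length := by
          unfold seg
          apply List.map_congr_left
          intro j _
          have := hper (i - p + j) (by omega)
          rw [show i - p + j + p = i + j by omega] at this
          rw [this]
        rw [this]
        exact hocc

/-! ### Stabilization of monotone bounded sequences -/

theorem stabilize (c : ℕ) : ∀ (f : ℕ → ℕ), (∀ k, f k ≤ f (k+1)) → (∀ k, f k ≤ c) →
    ∃ k0, ∀ k, k0 ≤ k → f k = f k0 := by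
  induction c with
  | zero =>
      intro f _ hbd
      exact ⟨0, fun k _ => by
        have := hbd k; have := hbd 0; omega⟩
  | succ c ih =>
      intro f hmono hbd
      have hm : Monotone f := monotone_nat_of_le_succ hmono
      rcases Classical.em (∃ k1, f k1 = c + 1) with ⟨k1, hk1⟩ | hno
      · refine ⟨k1, fun k hk => ?_⟩
        have h1 := hm hk
        have h2 := hbd k
        omega
      · apply ih f hmono
        intro k
        have := hbd k
        rcases Nat.lt_or_ge (f k) (c+1) with h | h
        · omega
        · exact absurd ⟨k, by omega⟩ hno

/-! ### Sum of a list of positive naturals equal to its length -/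

theorem all_one_of_sum_eq_length {f : A → ℕ} (hf : ∀ e, 1 ≤ f e) :
    ∀ (l : List A), (l.map f).sum = l.length → ∀ e ∈ l, f e = 1 := by
  intro l
  induction l with
  | nil => intro _ e he; exact absurd he List.not_mem_nil
  | cons c l ih =>
      intro hsum e he
      rw [List.map_cons, List.sum_cons, List.length_cons] at hsum
      have h1 : (l.map f).sum ≥ l.length := by
        calc l.length = (l.map fun _ => 1).sum := by simp
          _ ≤ (l.map f).sum := List.sum_le_sum (fun e _ => hf e)
      have hc : f c = 1 := by have := hf c; omega
      rcases List.mem_cons.mp he with rfl | he'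
      · exact hc
      · exact ih (by omega) e he'

end S19
namespace S19
open List

variable {A : Type*} {τ : A → List A} {a : A}

/-- Case A: if every letter occurring infinitely often has bounded images,
the fixed point is eventually periodic, hence has bounded complexity. -/
theorem caseA [Fintype A] (hprol : Prolongable τ a)
    (hbd : ∀ b, Pinf (fixedPoint τ a) b → ∃ c, ∀ k, (substIter τ k b).length ≤ c) :
    ∃ B : ℕ, ∀ n, complexity (fixedPoint τ a) n ≤ B := by
  classical
  obtain ⟨hh, hne, htend⟩ := hprol
  set x := fixedPoint τ a with hx
  -- (a) beyond N₀ every letter occurs infinitely often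
  have hNb : ∀ b : A, ∃ Nb, ¬ Pinf x b → ∀ i, Nb ≤ i → x i ≠ b := by
    intro b
    rcases Classical.em (Pinf x b) with h | h
    · exact ⟨0, fun h' => absurd h h'⟩
    · unfold Pinf at h
      rw [Set.not_infinite] at h
      rcases Set.Finite.bddAbove h with ⟨M, hM⟩
      refine ⟨M + 1, fun _ i hi hib => ?_⟩
      have := hM (Set.mem_setOf.mpr hib)
      omega
  choose Nb hNb using hNb
  set N₀ : ℕ := Finset.univ.sup Nb with hN₀
  have hP : ∀ i, N₀ ≤ i → Pinf x (x i) := by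
    intro i hi
    by_contra h
    exact hNb (x i) h i (le_trans (Finset.le_sup (Finset.mem_univ (x i))) hi) rfl
  -- (b) stabilization level k₀
  have hstab : ∀ b : A, ∃ k0, Pinf x b → ∀ k, k0 ≤ k →
      (substIter τ k b).length = (substIter τ k0 b).length := by
    intro b
    rcases Classical.em (Pinf x b) with h | h
    · obtain ⟨c, hc⟩ := hbd b h
      obtain ⟨k0, hk0⟩ := stabilize c (fun k => (substIter τ k b).length)
        (fun k => length_substIter_mono τ hne k b) hc
      exact ⟨k0, fun _ => hk0⟩
    · exact ⟨0, fun h' => absurd h' h⟩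
  choose kb hkb using hstab
  set k₀ : ℕ := max 1 (Finset.univ.sup kb) with hk₀
  have hk₀1 : 1 ≤ k₀ := le_max_left _ _
  have hstab' : ∀ b, Pinf x b → ∀ k, k₀ ≤ k →
      (substIter τ k b).length = (substIter τ k₀ b).length := by
    intro b hb k hk
    have hb1 : kb b ≤ k₀ := le_trans (Finset.le_sup (Finset.mem_univ b)) (le_max_right _ _)
    rw [hkb b hb k (le_trans hb1 hk), hkb b hb k₀ hb1]
  -- (c) letters in the k₀-image of an infinitely occurring letter have |τ e| = 1
  have hone : ∀ b, Pinf x b → ∀ e ∈ substIter τ k₀ b, (τ e).length = 1 := by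
    intro b hb e he
    have hsum : ((substIter τ k₀ b).map fun e => (substIter τ k₀ e).length).sum
        = (substIter τ k₀ b).length := by
      have h2 : substIter τ (k₀ + k₀) b = substWord (substIter τ k₀) (substIter τ k₀ b) :=
        substIter_add τ k₀ k₀ b
      have h3 := congrArg List.length h2
      rw [length_substWord] at h3
      rw [← h3, hstab' b hb (k₀ + k₀) (by omega)]
    have hall : (substIter τ k₀ e).length = 1 := all_one_of_sum_eq_length
      (f := fun e => (substIter τ k₀ e).length)
      (fun e => one_le_length_substIter τ hne k₀ e) _ hsum e he
    have h1 : (substIter τ 1 e).length ≤ (substIter τ k₀ e).length :=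
      monotone_nat_of_le_succ (fun k => length_substIter_mono τ hne k e) hk₀1
    have h0 := one_le_length_substIter τ hne 1 e
    rw [substIter_one] at h1 h0
    omega
  -- (d) beyond N₁ all letters have |τ| = 1
  set N₁ : ℕ := TT τ a k₀ N₀ with hN₁
  have hone' : ∀ i, N₁ ≤ i → (τ (x i)).length = 1 := by
    intro i hi
    obtain ⟨j, hj1, hj2⟩ := exists_block (τ := τ) (a := a) hne k₀ i
    have hjN : N₀ ≤ j := by
      by_contra h
      have : j + 1 ≤ N₀ := by omega
      have := TT_mono (τ := τ) (a := a) hne k₀ this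
      omega
    -- x i is a letter of (substIter τ k₀ (x j))
    have hseg1 : seg x j 1 = [x j] := by
      show (List.range 1).map (fun j' => x (j + j')) = [x j]
      have hr1 : List.range 1 = [0] := rfl
      rw [hr1, List.map_singleton, Nat.add_zero]
    have himg : substIter τ k₀ (x j)
        = seg x (TT τ a k₀ j) (TT τ a k₀ (j + 1) - TT τ a k₀ j) := by
      have := SI_seg (τ := τ) (a := a) hh hne htend k₀ j 1
      rw [hseg1, substWord_singleton] at this
      exact this
    have hmem : x i ∈ substIter τ k₀ (x j) := by
      rw [himg]
      have : x (TT τ a k₀ j + (i - TT τ a k₀ j))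
          ∈ seg x (TT τ a k₀ j) (TT τ a k₀ (j + 1) - TT τ a k₀ j) := mem_seg (by omega)
      rwa [show TT τ a k₀ j + (i - TT τ a k₀ j) = i by omega] at this
    exact hone (x j) (hP j hjN) (x i) hmem
  -- (e) the shift Δ
  have hTT1 : ∀ m, TT τ a 1 m = (substWord τ (wordPrefix x m)).length := by
    intro m
    unfold TT
    rw [substWord_congr (fun e => substIter_one τ e)]
  set Δ : ℕ := TT τ a 1 N₁ - N₁ with hΔ
  have hN₁le : N₁ ≤ TT τ a 1 N₁ := le_TT hne 1 N₁
  have hshift : ∀ m, N₁ ≤ m → TT τ a 1 m = m + Δ := by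
    intro m hm
    induction m with
    | zero =>
        have h0 : N₁ = 0 := by omega
        have h1 : TT τ a 1 0 = 0 := TT_zero 1
        have h2 : Δ = TT τ a 1 N₁ - N₁ := hΔ
        rw [h0] at h2
        omega
    | succ m ih =>
        rcases Nat.lt_or_ge m N₁ with h | h
        · have hmN : m + 1 = N₁ := by omega
          rw [hmN]
          omega
        · have h2 := TT_succ (τ := τ) (a := a) 1 m
          rw [substIter_one] at h2
          rw [h2, ih h, hone' m h]
          omega
  -- (f) Δ ≥ 1
  have hΔ1 : 1 ≤ Δ := by
    by_contra hcon
    have hΔ0 : Δ = 0 := by omega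
    obtain ⟨n₀, hn₀⟩ : ∃ n₀, N₁ ≤ (substIter τ n₀ a).length :=
      (htend.eventually_ge_atTop N₁).exists
    have hconst : ∀ n, n₀ ≤ n → (substIter τ n a).length = (substIter τ n₀ a).length := by
      intro n hn
      induction n with
      | zero =>
          have : n₀ = 0 := by omega
          rw [this]
      | succ n ih =>
          rcases Nat.lt_or_ge n n₀ with h | h
          · have : n₀ = n + 1 := by omega
            rw [this]
          · have hlen : (substIter τ n a).length = (substIter τ n₀ a).length := ih h
            have h1 : substIter τ (n+1) a = substWord τ (substIter τ n a) :=
              substIter_succ' τ n a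
            have h2 : substIter τ n a = wordPrefix x (substIter τ n a).length :=
              substIter_eq_wordPrefix hh n
            have h3 : (substIter τ (n+1) a).length = TT τ a 1 (substIter τ n a).length := by
              rw [h1, hTT1]
              congr 1
              conv_lhs => rw [h2]
            rw [h3, hshift _ (by omega), hΔ0, hlen]
            omega
    obtain ⟨n₁, hn₁⟩ : ∃ n₁, (substIter τ n₀ a).length + 1 ≤ (substIter τ n₁ a).length :=
      (htend.eventually_ge_atTop ((substIter τ n₀ a).length + 1)).exists
    rcases Nat.lt_or_ge n₁ n₀ with h | h
    · have hml : (substIter τ n₁ a).length ≤ (substIter τ n₀ a).length :=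
        monotone_nat_of_le_succ (fun k => length_substIter_mono τ hne k a) (le_of_lt h)
      omega
    · rw [hconst n₁ h] at hn₁
      omega
  -- (g) the letterwise step
  set τhat : A → A := fun b => (τ b).head (hne b) with hτhat
  have hstep : ∀ m, N₁ ≤ m → x (m + Δ) = τhat (x m) := by
    intro m hm
    obtain ⟨c, hc⟩ : ∃ c, τ (x m) = [c] := List.length_eq_one_iff.mp (hone' m hm)
    have h1 : wordPrefix x (TT τ a 1 (m+1)) = wordPrefix x (TT τ a 1 m) ++ τ (x m) := by
      have e1 := SI_wordPrefix (τ := τ) (a := a) hh htend 1 (m+1)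
      rw [wordPrefix_succ, substWord_append, substWord_singleton, substIter_one,
        SI_wordPrefix (τ := τ) (a := a) hh htend 1 m] at e1
      exact e1.symm
    rw [hshift _ hm, hshift _ (by omega), hc] at h1
    have h2 : wordPrefix x (m + 1 + Δ) = wordPrefix x (m + Δ) ++ [x (m + Δ)] := by
      rw [show m + 1 + Δ = (m + Δ) + 1 by omega, wordPrefix_succ]
    rw [h2] at h1
    have := List.append_inj_right h1 rfl
    have hx1 : x (m + Δ) = c := by
      simpa using this
    have h6 : τhat (x m) = c := by
      have hmem : τhat (x m) ∈ τ (x m) := List.head_mem (hne (x m))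
      rw [hc] at hmem
      simpa using hmem
    rw [hx1, h6]
  -- (h) iterate
  have hiter : ∀ k m, N₁ ≤ m → x (m + k * Δ) = τhat^[k] (x m) := by
    intro k
    induction k with
    | zero => intro m _; simp
    | succ k ih =>
        intro m hm
        have h1 : m + (k+1) * Δ = (m + k * Δ) + Δ := by ring
        rw [h1, hstep (m + k * Δ) (by omega), ih m hm,
          Function.iterate_succ_apply' τhat k (x m)]
  -- (i) pigeonhole on iterates
  obtain ⟨k₁, k₂, hkne, hkeq⟩ :
      ∃ k₁ k₂ : ℕ, k₁ ≠ k₂ ∧ τhat^[k₁] = τhat^[k₂] :=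
    Finite.exists_ne_map_eq_of_infinite (fun k : ℕ => τhat^[k])
  -- wlog k₁ < k₂
  obtain ⟨l₁, l₂, hl, hleq⟩ : ∃ l₁ l₂ : ℕ, l₁ < l₂ ∧ τhat^[l₁] = τhat^[l₂] := by
    rcases Nat.lt_or_ge k₁ k₂ with h | h
    · exact ⟨k₁, k₂, h, hkeq⟩
    · exact ⟨k₂, k₁, by omega, hkeq.symm⟩
  -- (j) periodicity
  set p : ℕ := (l₂ - l₁) * Δ with hp
  have hp1 : 1 ≤ p := by
    have : 1 ≤ l₂ - l₁ := by omega
    calc 1 = 1 * 1 := rfl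
      _ ≤ (l₂ - l₁) * Δ := Nat.mul_le_mul this hΔ1
  set T₀ : ℕ := N₁ + l₁ * Δ with hT₀
  have hper : ∀ t, T₀ ≤ t → x (t + p) = x t := by
    intro t ht
    set m : ℕ := t - l₁ * Δ with hm
    have hmN : N₁ ≤ m := by omega
    have e1 : t + p = m + l₂ * Δ := by
      have : l₁ ≤ l₂ := by omega
      have h2 : l₁ * Δ ≤ l₂ * Δ := Nat.mul_le_mul_right Δ this
      have h3 : (l₂ - l₁) * Δ = l₂ * Δ - l₁ * Δ := by
        rw [Nat.sub_mul]
      omega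
    have e2 : t = m + l₁ * Δ := by omega
    rw [e1, e2, hiter l₂ m hmN, hiter l₁ m hmN, hleq]
  -- (k) conclude
  refine ⟨T₀ + p, fun n => ?_⟩
  exact complexity_le_of_occ x n (T₀ + p) (fun w _ hfac => occ_lt_of_periodic hp1 hper w hfac)

end S19
namespace S19
open List

variable {A : Type*} {τ : A → List A} {a : A}

/-! ### More growth lemmas -/

theorem mem_of_one_le_cnt {b : A} {u : List A} (h : 1 ≤ cnt b u) : b ∈ u := by
  unfold cnt at h
  obtain ⟨e, he, hd⟩ := List.countP_pos_iff.mp (Nat.lt_of_lt_of_le Nat.zero_lt_one h)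
  have : e = b := by simpa using hd
  rwa [this] at he

theorem length_le_length_substWord_of_mem (σ : A → List A) {b : A} {u : List A}
    (h : b ∈ u) : (σ b).length ≤ (substWord σ u).length := by
  have h1 := one_le_cnt_of_mem h
  have h2 := cnt_mul_le_length_substWord σ b u
  calc (σ b).length = 1 * (σ b).length := (Nat.one_mul _).symm
    _ ≤ cnt b u * (σ b).length := Nat.mul_le_mul_right _ h1
    _ ≤ _ := h2

theorem sum_map_le_mul {f : A → ℕ} {M : ℕ} (hf : ∀ e, f e ≤ M) (u : List A) :
    (u.map f).sum ≤ u.length * M := by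
  have := List.sum_le_card_nsmul (u.map f) M (by
    intro y hy
    obtain ⟨e, _, rfl⟩ := List.mem_map.mp hy
    exact hf e)
  rwa [List.length_map, smul_eq_mul] at this

theorem length_substIter_succ_le {M₁ : ℕ} (hM₁ : ∀ b, (τ b).length ≤ M₁) (k : ℕ) (b : A) :
    (substIter τ (k+1) b).length ≤ M₁ * (substIter τ k b).length := by
  rw [substIter_succ', length_substWord, Nat.mul_comm]
  exact sum_map_le_mul hM₁ _

theorem length_substIter_add_le {M₁ : ℕ} (hM₁ : ∀ b, (τ b).length ≤ M₁) (j k : ℕ) (b : A) :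
    (substIter τ (k + j) b).length ≤ M₁ ^ j * (substIter τ k b).length := by
  induction j with
  | zero => simp
  | succ j ih =>
      calc (substIter τ (k + (j+1)) b).length
          = (substIter τ ((k + j) + 1) b).length := by rw [Nat.add_succ]
        _ ≤ M₁ * (substIter τ (k + j) b).length := length_substIter_succ_le hM₁ _ b
        _ ≤ M₁ * (M₁ ^ j * (substIter τ k b).length) := Nat.mul_le_mul_left _ ih
        _ = M₁ ^ (j+1) * (substIter τ k b).length := by ring

/-- The image of the letter at position `i` is the segment between consecutive
block boundaries. -/
theorem letter_image_seg (hh : (τ a).head? = some a) (hne : ∀ b, τ b ≠ [])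
    (htend : Filter.Tendsto (fun n => (substIter τ n a).length) Filter.atTop Filter.atTop)
    (k i : ℕ) :
    substIter τ k (fixedPoint τ a i)
      = seg (fixedPoint τ a) (TT τ a k i) (TT τ a k (i + 1) - TT τ a k i) := by
  have hseg1 : seg (fixedPoint τ a) i 1 = [fixedPoint τ a i] := by
    show (List.range 1).map (fun j' => fixedPoint τ a (i + j')) = _
    have hr1 : List.range 1 = [0] := rfl
    rw [hr1, List.map_singleton, Nat.add_zero]
  have := SI_seg (τ := τ) (a := a) hh hne htend k i 1
  rwa [hseg1, substWord_singleton] at this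

/-- `TT` along a concatenation of letters. -/
theorem TT_add_seg (k m : ℕ) : ∀ d, TT τ a k (m + d)
    = TT τ a k m + ∑ j ∈ Finset.range d, (substIter τ k (fixedPoint τ a (m + j))).length := by
  intro d
  induction d with
  | zero => simp
  | succ d ih =>
      rw [← Nat.add_assoc, TT_succ, ih, Finset.sum_range_succ]
      omega

/-- Composition of scales. -/
theorem TT_comp (hh : (τ a).head? = some a)
    (htend : Filter.Tendsto (fun n => (substIter τ n a).length) Filter.atTop Filter.atTop)
    (k m : ℕ) : TT τ a (k + 1) m = TT τ a k (TT τ a 1 m) := by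
  have h1 : substWord (substIter τ (k+1)) (wordPrefix (fixedPoint τ a) m)
      = substWord (substIter τ k) (substWord (substIter τ 1) (wordPrefix (fixedPoint τ a) m)) := by
    rw [substWord_substWord]
    exact substWord_congr (fun b => substIter_add τ k 1 b) _
  show (substWord (substIter τ (k+1)) (wordPrefix (fixedPoint τ a) m)).length = _
  rw [h1, SI_wordPrefix (τ := τ) (a := a) hh htend 1 m]
  rfl

theorem TT_zero_k (m : ℕ) : TT τ a 0 m = m := by
  show (substWord (substIter τ 0) (wordPrefix (fixedPoint τ a) m)).length = m
  rw [substWord_substIter_zero, length_wordPrefix]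

/-! ### Position-based bound for sets of factors -/

theorem ncard_occ_lt_le (x : ℕ → A) (n T : ℕ) :
    Set.ncard {w : List A | w.length = n ∧ ∃ i, i < T ∧ OccursAt x w i} ≤ T := by
  have hsub : {w : List A | w.length = n ∧ ∃ i, i < T ∧ OccursAt x w i}
      ⊆ (fun i => seg x i n) '' (Set.Iio T) := by
    rintro w ⟨hlen, i, hiT, hocc⟩
    refine ⟨i, hiT, ?_⟩
    rw [occursAt_iff_seg] at hocc
    show seg x i n = w
    rw [← hlen, ← hocc]
  calc Set.ncard {w : List A | w.length = n ∧ ∃ i, i < T ∧ OccursAt x w i}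
      ≤ Set.ncard ((fun i => seg x i n) '' (Set.Iio T)) :=
        Set.ncard_le_ncard hsub ((Set.finite_Iio T).image _)
    _ ≤ Set.ncard (Set.Iio T) := Set.ncard_image_le (Set.finite_Iio T)
    _ = T := by rw [← Finset.coe_Iio, Set.ncard_coe_finset, Nat.card_Iio]

/-- Beyond some position, every letter of `x` occurs infinitely often. -/
theorem exists_N0 [Fintype A] (x : ℕ → A) : ∃ N₀, ∀ i, N₀ ≤ i → Pinf x (x i) := by
  classical
  have hNb : ∀ b : A, ∃ Nb, ¬ Pinf x b → ∀ i, Nb ≤ i → x i ≠ b := by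
    intro b
    rcases Classical.em (Pinf x b) with h | h
    · exact ⟨0, fun h' => absurd h h'⟩
    · unfold Pinf at h
      rw [Set.not_infinite] at h
      rcases Set.Finite.bddAbove h with ⟨M, hM⟩
      refine ⟨M + 1, fun _ i hi hib => ?_⟩
      have := hM (Set.mem_setOf.mpr hib)
      omega
  choose Nb hNb using hNb
  refine ⟨Finset.univ.sup Nb, fun i hi => ?_⟩
  by_contra h
  exact hNb (x i) h i (le_trans (Finset.le_sup (Finset.mem_univ (x i))) hi) rfl

end S19
namespace S19
open List

variable {A : Type*} {τ : A → List A} {a : A}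

theorem complexity_zero_le (x : ℕ → A) : complexity x 0 ≤ 1 := by
  unfold complexity
  have hsub : {w : List A | w.length = 0 ∧ IsFactor x w} ⊆ {([] : List A)} := by
    rintro w ⟨hlen, -⟩
    rw [List.length_eq_zero_iff] at hlen
    exact hlen
  calc Set.ncard {w : List A | w.length = 0 ∧ IsFactor x w}
      ≤ Set.ncard {([] : List A)} := Set.ncard_le_ncard hsub (Set.finite_singleton _)
    _ = 1 := Set.ncard_singleton _

theorem complexity_one_le [Fintype A] (x : ℕ → A) : complexity x 1 ≤ Nat.card A := by
  unfold complexity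
  have hsub : {w : List A | w.length = 1 ∧ IsFactor x w}
      ⊆ (fun b : A => [b]) '' Set.univ := by
    rintro w ⟨hlen, -⟩
    obtain ⟨b, rfl⟩ := List.length_eq_one_iff.mp hlen
    exact ⟨b, Set.mem_univ b, rfl⟩
  calc Set.ncard {w : List A | w.length = 1 ∧ IsFactor x w}
      ≤ Set.ncard ((fun b : A => [b]) '' Set.univ) :=
        Set.ncard_le_ncard hsub (Set.finite_univ.image _)
    _ ≤ Set.ncard (Set.univ : Set A) := Set.ncard_image_le Set.finite_univ
    _ = Nat.card A := Set.ncard_univ A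

/-- Case B: some letter occurring infinitely often has unbounded images. -/
theorem caseB [Fintype A] (hprol : Prolongable τ a)
    (hbal : FactorBalanced (fixedPoint τ a)) {g : A}
    (hg : Pinf (fixedPoint τ a) g)
    (hgrow : ∀ c, ∃ k, c ≤ (substIter τ k g).length) :
    ∃ B : ℕ, 1 ≤ B ∧ ∀ n, complexity (fixedPoint τ a) n ≤ B * n + B := by
  classical
  obtain ⟨hh, hne, htend⟩ := hprol
  set x := fixedPoint τ a with hx
  obtain ⟨C, hC1, hC⟩ := balance_nat (τ := τ) (a := a) hbal
  obtain ⟨R₀, hR₀1, hgap⟩ := gap_exists (τ := τ) (a := a) hC hg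
  have hmulti := gap_multi (x := x) (b := g) (R := R₀) hgap
  set M₁ : ℕ := Finset.univ.sup (fun b : A => (τ b).length) with hM₁def
  have hM₁ : ∀ b : A, (τ b).length ≤ M₁ :=
    fun b => Finset.le_sup (f := fun b : A => (τ b).length) (Finset.mem_univ b)
  have hM₁1 : 1 ≤ M₁ := le_trans (List.length_pos_iff.mpr (hne a)) (hM₁ a)
  have hℓ1 : ∀ k b, 1 ≤ (substIter τ k b).length :=
    fun k b => one_le_length_substIter τ hne k b
  have hℓmono : ∀ (b : A), Monotone fun k => (substIter τ k b).length := fun b =>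
    monotone_nat_of_le_succ (fun k => length_substIter_mono τ hne k b)
  -- the letter g as a position
  obtain ⟨i₀, hi₀⟩ : ∃ i₀, x i₀ = g := by
    obtain ⟨i₀, hmem, -⟩ := Set.Infinite.exists_gt hg 0
    exact ⟨i₀, hmem⟩
  have himg : ∀ j, substIter τ j g
      = seg x (TT τ a j i₀) (TT τ a j (i₀ + 1) - TT τ a j i₀) := by
    intro j
    rw [← hi₀]
    exact letter_image_seg hh hne htend j i₀
  have hlenimg : ∀ j, TT τ a j (i₀ + 1) - TT τ a j i₀ = (substIter τ j g).length := by
    intro j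
    have := congrArg List.length (himg j)
    rw [length_seg] at this
    exact this.symm
  -- doubling
  obtain ⟨J', hJ'⟩ := hgrow (2 * R₀)
  have hJ'1 : 1 ≤ J' := by
    by_contra h
    have h0 : J' = 0 := by omega
    rw [h0] at hJ'
    have h1 : (substIter τ 0 g).length = 1 := rfl
    omega
  have hdouble : ∀ k, 2 * (substIter τ k g).length ≤ (substIter τ (k + J') g).length := by
    intro k
    have h2 : 2 ≤ cnt g (substIter τ J' g) := by
      rw [himg J']
      exact hmulti 2 _ _ (by rw [hlenimg J']; omega)
    calc 2 * (substIter τ k g).length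
        ≤ cnt g (substIter τ J' g) * (substIter τ k g).length :=
          Nat.mul_le_mul_right _ h2
      _ ≤ (substWord (substIter τ k) (substIter τ J' g)).length :=
          cnt_mul_le_length_substWord _ g _
      _ = (substIter τ (k + J') g).length := by rw [← substIter_add]
  -- partial sums
  have hsum : ∀ k, ∑ j ∈ Finset.range k, (substIter τ j g).length
      ≤ 2 * J' * (substIter τ k g).length := by
    intro k
    induction k using Nat.strong_induction_on with
    | _ k ih =>
        rcases le_or_gt k J' with h | h
        · calc ∑ j ∈ Finset.range k, (substIter τ j g).length
              ≤ (Finset.range k).card • (substIter τ k g).length := by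
                apply Finset.sum_le_card_nsmul
                intro j hj
                exact hℓmono g (le_of_lt (Finset.mem_range.mp hj))
            _ = k * (substIter τ k g).length := by rw [Finset.card_range, smul_eq_mul]
            _ ≤ 2 * J' * (substIter τ k g).length := by
                apply Nat.mul_le_mul_right
                omega
        · have hks : k = (k - J') + J' := by omega
          have hsplit : ∑ j ∈ Finset.range k, (substIter τ j g).length
              = ∑ j ∈ Finset.range (k - J'), (substIter τ j g).length
                + ∑ j ∈ Finset.range J', (substIter τ ((k - J') + j) g).length := by
            conv_lhs => rw [hks]
            exact Finset.sum_range_add _ _ _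
          have h1 : ∑ j ∈ Finset.range (k - J'), (substIter τ j g).length
              ≤ 2 * J' * (substIter τ (k - J') g).length := ih (k - J') (by omega)
          have h2 : ∑ j ∈ Finset.range J', (substIter τ ((k - J') + j) g).length
              ≤ J' * (substIter τ k g).length := by
            calc ∑ j ∈ Finset.range J', (substIter τ ((k - J') + j) g).length
                ≤ (Finset.range J').card • (substIter τ k g).length := by
                  apply Finset.sum_le_card_nsmul
                  intro j hj
                  exact hℓmono g (by
                    have := Finset.mem_range.mp hj
                    omega)
              _ = J' * (substIter τ k g).length := by rw [Finset.card_range, smul_eq_mul]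
          have h3 : 2 * (substIter τ (k - J') g).length ≤ (substIter τ k g).length := by
            have := hdouble (k - J')
            rwa [← hks] at this
          have h4 : 2 * J' * (substIter τ (k - J') g).length
              ≤ J' * (substIter τ k g).length := by
            calc 2 * J' * (substIter τ (k - J') g).length
                = J' * (2 * (substIter τ (k - J') g).length) := by ring
              _ ≤ J' * (substIter τ k g).length := Nat.mul_le_mul_left _ h3
          calc ∑ j ∈ Finset.range k, (substIter τ j g).length
              = _ + _ := hsplit
            _ ≤ 2 * J' * (substIter τ (k - J') g).length + J' * (substIter τ k g).length :=
                Nat.add_le_add h1 h2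
            _ ≤ J' * (substIter τ k g).length + J' * (substIter τ k g).length :=
                Nat.add_le_add_right h4 _
            _ = 2 * J' * (substIter τ k g).length := by ring
  -- bound for letters occurring infinitely often
  have hPb : ∀ b : A, ∃ jbv : ℕ, Pinf x b → ∀ k,
      (substIter τ k b).length ≤ M₁ ^ jbv * (substIter τ k g).length := by
    intro b
    rcases Classical.em (Pinf x b) with hb | hb
    · obtain ⟨Rb, hRb1, hgapb⟩ := gap_exists (τ := τ) (a := a) hC hb
      obtain ⟨jbv, hjbv⟩ := hgrow Rb
      refine ⟨jbv, fun _ k => ?_⟩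
      have hbmem : b ∈ substIter τ jbv g := by
        rw [himg jbv]
        apply mem_of_one_le_cnt
        apply hgapb
        rw [hlenimg]
        exact hjbv
      have h1 : (substIter τ k b).length ≤ (substIter τ (k + jbv) g).length := by
        have := length_le_length_substWord_of_mem (substIter τ k) hbmem
        rwa [← substIter_add] at this
      calc (substIter τ k b).length ≤ (substIter τ (k + jbv) g).length := h1
        _ ≤ M₁ ^ jbv * (substIter τ k g).length := length_substIter_add_le hM₁ jbv k g
    · exact ⟨0, fun h' => absurd h' hb⟩
  choose jb hjb using hPb
  set Jp : ℕ := Finset.univ.sup jb with hJp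
  have hPbd : ∀ b, Pinf x b → ∀ k,
      (substIter τ k b).length ≤ M₁ ^ Jp * (substIter τ k g).length := by
    intro b hb k
    calc (substIter τ k b).length ≤ M₁ ^ jb b * (substIter τ k g).length := hjb b hb k
      _ ≤ M₁ ^ Jp * (substIter τ k g).length := by
          apply Nat.mul_le_mul_right
          exact Nat.pow_le_pow_right hM₁1 (Finset.le_sup (Finset.mem_univ b))
  -- position beyond which all letters are recurrent
  obtain ⟨N₀, hN₀⟩ := exists_N0 x
  set q1 : ℕ := TT τ a 1 N₀ with hq1
  have hN₀q1 : N₀ ≤ q1 := le_TT hne 1 N₀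
  -- prefix image bound
  have hqk : ∀ k, TT τ a k N₀
      ≤ N₀ + q1 * ∑ j ∈ Finset.range k, (M₁ ^ Jp * (substIter τ j g).length) := by
    intro k
    induction k with
    | zero => rw [TT_zero_k]; simp
    | succ k ih =>
        have h1 : TT τ a (k + 1) N₀ = TT τ a k q1 := TT_comp hh htend k N₀
        have h2 : TT τ a k q1 = TT τ a k N₀
            + ∑ j ∈ Finset.range (q1 - N₀), (substIter τ k (x (N₀ + j))).length := by
          have := TT_add_seg (τ := τ) (a := a) k N₀ (q1 - N₀)
          rwa [Nat.add_sub_cancel' hN₀q1] at this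
        have h3 : ∑ j ∈ Finset.range (q1 - N₀), (substIter τ k (x (N₀ + j))).length
            ≤ q1 * (M₁ ^ Jp * (substIter τ k g).length) := by
          calc ∑ j ∈ Finset.range (q1 - N₀), (substIter τ k (x (N₀ + j))).length
              ≤ (Finset.range (q1 - N₀)).card • (M₁ ^ Jp * (substIter τ k g).length) := by
                apply Finset.sum_le_card_nsmul
                intro j _
                exact hPbd (x (N₀ + j)) (hN₀ (N₀ + j) (Nat.le_add_right _ _)) k
            _ = (q1 - N₀) * (M₁ ^ Jp * (substIter τ k g).length) := by
                rw [Finset.card_range, smul_eq_mul]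
            _ ≤ q1 * (M₁ ^ Jp * (substIter τ k g).length) := by
                apply Nat.mul_le_mul_right
                omega
        have h5 : q1 * ∑ j ∈ Finset.range (k + 1), (M₁ ^ Jp * (substIter τ j g).length)
            = q1 * ∑ j ∈ Finset.range k, (M₁ ^ Jp * (substIter τ j g).length)
              + q1 * (M₁ ^ Jp * (substIter τ k g).length) := by
          rw [Finset.sum_range_succ, Nat.mul_add]
        omega
  -- constants
  set V : ℕ := 2 * R₀ + 1 with hV
  set K₁ : ℕ := ((List.finite_length_le A V).toFinset).card with hK₁
  -- the main bound for n ≥ 2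
  have hmain : ∀ n, 2 ≤ n → complexity x n
      ≤ K₁ * (M₁ ^ (Jp + 1) * n) + (N₀ + q1 * (M₁ ^ Jp * (2 * J' * (M₁ * n)))) := by
    intro n hn2
    obtain ⟨k, hk1, hk2⟩ : ∃ k, n ≤ (substIter τ k g).length
        ∧ (substIter τ k g).length ≤ M₁ * n := by
      have hex : ∃ k, n ≤ (substIter τ k g).length := hgrow n
      have hfind := Nat.find_spec hex
      refine ⟨Nat.find hex, hfind, ?_⟩
      set k := Nat.find hex with hkdef
      have hk0 : k ≠ 0 := by
        intro h0
        rw [h0] at hfind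
        have h1 : (substIter τ 0 g).length = 1 := rfl
        omega
      have hklt : ¬ n ≤ (substIter τ (k - 1) g).length :=
        Nat.find_min hex (Nat.sub_lt (Nat.pos_of_ne_zero hk0) Nat.one_pos)
      have hstep : (substIter τ k g).length ≤ M₁ * (substIter τ (k - 1) g).length := by
        have h6 := length_substIter_succ_le hM₁ (k - 1) g
        have h7 : k - 1 + 1 = k := by omega
        rwa [h7] at h6
      calc (substIter τ k g).length ≤ M₁ * (substIter τ (k - 1) g).length := hstep
        _ ≤ M₁ * n := Nat.mul_le_mul_left _ (by omega)
    set T : ℕ := TT τ a k N₀ with hT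
    set F : List A × ℕ → List A :=
      fun p => ((substWord (substIter τ k) p.1).drop p.2).take n with hF
    set D : Finset (List A × ℕ) :=
      ((List.finite_length_le A V).toFinset) ×ˢ (Finset.Iio (M₁ ^ (Jp + 1) * n)) with hD
    have hclass1 : {w : List A | w.length = n ∧ ∃ i, T ≤ i ∧ OccursAt x w i}
        ⊆ ↑(D.image F) := by
      rintro w ⟨hlen, i, hiT, hocc⟩
      rw [occursAt_iff_seg, hlen] at hocc
      obtain ⟨j₁, hj₁a, hj₁b⟩ := exists_block (τ := τ) (a := a) hne k i
      obtain ⟨j₂, hj₂a, hj₂b⟩ := exists_block (τ := τ) (a := a) hne k (i + n - 1)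
      have hj₁₂ : j₁ ≤ j₂ := by
        by_contra hcon
        have := TT_mono (τ := τ) (a := a) hne k (show j₂ + 1 ≤ j₁ by omega)
        omega
      have hN₀j₁ : N₀ ≤ j₁ := by
        by_contra hcon
        have := TT_mono (τ := τ) (a := a) hne k (show j₁ + 1 ≤ N₀ by omega)
        omega
      set v : List A := seg x j₁ (j₂ + 1 - j₁) with hv
      set s : ℕ := i - TT τ a k j₁ with hs
      have himgv : substWord (substIter τ k) v
          = seg x (TT τ a k j₁) (TT τ a k (j₂ + 1) - TT τ a k j₁) := by
        have := SI_seg (τ := τ) (a := a) hh hne htend k j₁ (j₂ + 1 - j₁)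
        rwa [show j₁ + (j₂ + 1 - j₁) = j₂ + 1 by omega] at this
      have hFvs : F (v, s) = w := by
        show ((substWord (substIter τ k) v).drop s).take n = w
        rw [himgv, seg_drop x _ _ s (by omega),
          show TT τ a k j₁ + s = i by omega,
          seg_take x i _ n (by omega)]
        exact hocc.symm
      have hsb : s < M₁ ^ (Jp + 1) * n := by
        have h1 : s < (substIter τ k (x j₁)).length := by
          have h1a := TT_succ (τ := τ) (a := a) k j₁
          rw [← hx] at h1a
          omega
        have h2 : (substIter τ k (x j₁)).length ≤ M₁ ^ Jp * (substIter τ k g).length :=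
          hPbd (x j₁) (hN₀ j₁ hN₀j₁) k
        have h3 : M₁ ^ Jp * (substIter τ k g).length ≤ M₁ ^ Jp * (M₁ * n) :=
          Nat.mul_le_mul_left _ hk2
        have h4 : M₁ ^ Jp * (M₁ * n) = M₁ ^ (Jp + 1) * n := by
          rw [pow_succ]; ring
        calc s < (substIter τ k (x j₁)).length := h1
          _ ≤ M₁ ^ Jp * (substIter τ k g).length := h2
          _ ≤ M₁ ^ Jp * (M₁ * n) := h3
          _ = M₁ ^ (Jp + 1) * n := h4
      have hvb : v.length ≤ V := by
        rw [hv, length_seg]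
        rcases Nat.lt_or_ge j₁ j₂ with hlt | hge
        · have hcnt : cnt g (seg x (j₁ + 1) (j₂ - (j₁ + 1))) = 0 := by
            by_contra hcon
            have h1 : 1 ≤ cnt g (seg x (j₁ + 1) (j₂ - (j₁ + 1))) := by omega
            have h2 := cnt_mul_le_length_substWord (substIter τ k) g
              (seg x (j₁ + 1) (j₂ - (j₁ + 1)))
            have h3 : (substWord (substIter τ k) (seg x (j₁ + 1) (j₂ - (j₁ + 1)))).length
                = TT τ a k j₂ - TT τ a k (j₁ + 1) := by
              have := length_SI_seg (τ := τ) (a := a) hh hne htend k (j₁ + 1) (j₂ - (j₁ + 1))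
              rwa [show j₁ + 1 + (j₂ - (j₁ + 1)) = j₂ by omega] at this
            have h4 : (substIter τ k g).length ≤ TT τ a k j₂ - TT τ a k (j₁ + 1) := by
              have h5 : 1 * (substIter τ k g).length
                  ≤ cnt g (seg x (j₁ + 1) (j₂ - (j₁ + 1))) * (substIter τ k g).length :=
                Nat.mul_le_mul_right _ h1
              rw [Nat.one_mul] at h5
              exact le_trans h5 (by rw [← h3]; exact h2)
            omega
          have hlen' : j₂ - (j₁ + 1) < R₀ := by
            by_contra hcon
            have h8 := hgap (j₁ + 1) (j₂ - (j₁ + 1)) (by omega)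
            rw [← hx] at h8
            omega
          omega
        · omega
      rw [← hFvs]
      apply Finset.mem_coe.mpr
      apply Finset.mem_image_of_mem
      rw [hD, Finset.mem_product]
      exact ⟨by rw [Set.Finite.mem_toFinset]; exact hvb, by rw [Finset.mem_Iio]; exact hsb⟩
    -- put the two classes together
    have hfin1 : {w : List A | w.length = n ∧ ∃ i, i < T ∧ OccursAt x w i}.Finite := by
      apply Set.Finite.subset (List.finite_length_le A n)
      rintro w ⟨hlen, -⟩
      exact le_of_eq hlen
    have hfin2 : {w : List A | w.length = n ∧ ∃ i, T ≤ i ∧ OccursAt x w i}.Finite := by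
      apply Set.Finite.subset (List.finite_length_le A n)
      rintro w ⟨hlen, -⟩
      exact le_of_eq hlen
    have hsplit : {w : List A | w.length = n ∧ IsFactor x w}
        ⊆ {w : List A | w.length = n ∧ ∃ i, i < T ∧ OccursAt x w i}
          ∪ {w : List A | w.length = n ∧ ∃ i, T ≤ i ∧ OccursAt x w i} := by
      rintro w ⟨hlen, i, hocc⟩
      rcases Nat.lt_or_ge i T with h | h
      · exact Or.inl ⟨hlen, i, h, hocc⟩
      · exact Or.inr ⟨hlen, i, h, hocc⟩
    have hc1 : Set.ncard {w : List A | w.length = n ∧ ∃ i, T ≤ i ∧ OccursAt x w i}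
        ≤ K₁ * (M₁ ^ (Jp + 1) * n) := by
      calc Set.ncard {w : List A | w.length = n ∧ ∃ i, T ≤ i ∧ OccursAt x w i}
          ≤ Set.ncard (↑(D.image F) : Set (List A)) :=
            Set.ncard_le_ncard hclass1 (D.image F).finite_toSet
        _ = (D.image F).card := Set.ncard_coe_finset _
        _ ≤ D.card := Finset.card_image_le
        _ = K₁ * (M₁ ^ (Jp + 1) * n) := by
            rw [hD, Finset.card_product, Nat.card_Iio]
    have hc2 : Set.ncard {w : List A | w.length = n ∧ ∃ i, i < T ∧ OccursAt x w i} ≤ T :=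
      ncard_occ_lt_le x n T
    have hT2 : T ≤ N₀ + q1 * (M₁ ^ Jp * (2 * J' * (M₁ * n))) := by
      have h1 := hqk k
      have h2 : ∑ j ∈ Finset.range k, (M₁ ^ Jp * (substIter τ j g).length)
          = M₁ ^ Jp * ∑ j ∈ Finset.range k, (substIter τ j g).length :=
        (Finset.mul_sum _ _ _).symm
      have h3 := hsum k
      have h4 : M₁ ^ Jp * ∑ j ∈ Finset.range k, (substIter τ j g).length
          ≤ M₁ ^ Jp * (2 * J' * (M₁ * n)) := by
        apply Nat.mul_le_mul_left
        calc ∑ j ∈ Finset.range k, (substIter τ j g).length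
            ≤ 2 * J' * (substIter τ k g).length := h3
          _ ≤ 2 * J' * (M₁ * n) := Nat.mul_le_mul_left _ hk2
      have h5 : q1 * ∑ j ∈ Finset.range k, (M₁ ^ Jp * (substIter τ j g).length)
          ≤ q1 * (M₁ ^ Jp * (2 * J' * (M₁ * n))) := by
        rw [h2]
        exact Nat.mul_le_mul_left _ h4
      omega
    unfold complexity
    calc Set.ncard {w : List A | w.length = n ∧ IsFactor x w}
        ≤ Set.ncard ({w : List A | w.length = n ∧ ∃ i, i < T ∧ OccursAt x w i}
          ∪ {w : List A | w.length = n ∧ ∃ i, T ≤ i ∧ OccursAt x w i}) :=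
          Set.ncard_le_ncard hsplit (Set.Finite.union hfin1 hfin2)
      _ ≤ Set.ncard {w : List A | w.length = n ∧ ∃ i, i < T ∧ OccursAt x w i}
          + Set.ncard {w : List A | w.length = n ∧ ∃ i, T ≤ i ∧ OccursAt x w i} :=
          Set.ncard_union_le _ _
      _ ≤ T + K₁ * (M₁ ^ (Jp + 1) * n) := Nat.add_le_add hc2 hc1
      _ ≤ K₁ * (M₁ ^ (Jp + 1) * n) + (N₀ + q1 * (M₁ ^ Jp * (2 * J' * (M₁ * n)))) := by
          omega
  -- assemble the linear bound
  set E1 : ℕ := K₁ * M₁ ^ (Jp + 1) with hE1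
  set E2 : ℕ := q1 * (M₁ ^ Jp * (2 * J' * M₁)) with hE2
  refine ⟨E1 + E2 + N₀ + Nat.card A + 1, by omega, ?_⟩
  intro n
  match n, Nat.lt_or_ge n 2 with
  | 0, _ =>
      have h0 := complexity_zero_le x
      have : complexity x 0 ≤ E1 + E2 + N₀ + Nat.card A + 1 := by omega
      omega
  | 1, _ =>
      have h1 := complexity_one_le x
      have h2 : (E1 + E2 + N₀ + Nat.card A + 1) * 1 = E1 + E2 + N₀ + Nat.card A + 1 := by ring
      omega
  | (m + 2), _ =>
      set n' : ℕ := m + 2 with hn'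
      have h1 := hmain n' (by omega)
      have h2 : K₁ * (M₁ ^ (Jp + 1) * n') + (N₀ + q1 * (M₁ ^ Jp * (2 * J' * (M₁ * n'))))
          = (E1 + E2) * n' + N₀ := by
        rw [hE1, hE2]
        ring
      have h3 : (E1 + E2) * n' ≤ (E1 + E2 + N₀ + Nat.card A + 1) * n' :=
        Nat.mul_le_mul_right _ (by omega)
      have h4 : N₀ ≤ E1 + E2 + N₀ + Nat.card A + 1 := by omega
      omega

end S19
/-- Proposition: a factor-balanced fixed point of a substitution has linear factor
complexity. -/
theorem stmt19 {A : Type*} [Fintype A] (τ : A → List A) (a : A)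
    (hprol : Prolongable τ a) (hbal : FactorBalanced (fixedPoint τ a)) :
    ∃ D : ℝ, 0 < D ∧ ∀ n : ℕ,
      (complexity (fixedPoint τ a) n : ℝ) ≤ D * (n : ℝ) + D := by
  classical
  rcases Classical.em (∃ g, S19.Pinf (fixedPoint τ a) g ∧
      ∀ c, ∃ k, c ≤ (substIter τ k g).length) with ⟨g, hg, hgrow⟩ | hA
  · obtain ⟨B, hB1, hB⟩ := S19.caseB hprol hbal hg hgrow
    refine ⟨(B : ℝ), by exact_mod_cast Nat.lt_of_lt_of_le Nat.zero_lt_one hB1, fun n => ?_⟩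
    have h1 := hB n
    have h2 : (complexity (fixedPoint τ a) n : ℝ) ≤ ((B * n + B : ℕ) : ℝ) := by
      exact_mod_cast h1
    calc (complexity (fixedPoint τ a) n : ℝ) ≤ ((B * n + B : ℕ) : ℝ) := h2
      _ = (B : ℝ) * (n : ℝ) + (B : ℝ) := by push_cast; ring
  · have hbd : ∀ b, S19.Pinf (fixedPoint τ a) b →
        ∃ c, ∀ k, (substIter τ k b).length ≤ c := by
      intro b hb
      by_contra hcon
      push_neg at hcon
      apply hA
      refine ⟨b, hb, fun c => ?_⟩
      obtain ⟨k, hk⟩ := hcon c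
      exact ⟨k, by omega⟩
    obtain ⟨B, hB⟩ := S19.caseA hprol hbd
    refine ⟨(B : ℝ) + 1, by positivity, fun n => ?_⟩
    have h1 := hB n
    have h2 : (complexity (fixedPoint τ a) n : ℝ) ≤ (B : ℝ) + 1 := by
      have : (complexity (fixedPoint τ a) n : ℝ) ≤ (B : ℝ) := by exact_mod_cast h1
      linarith
    calc (complexity (fixedPoint τ a) n : ℝ) ≤ (B : ℝ) + 1 := h2
      _ ≤ ((B : ℝ) + 1) * (n : ℝ) + ((B : ℝ) + 1) := by
          have hn : (0 : ℝ) ≤ (n : ℝ) := Nat.cast_nonneg n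
          nlinarith
end
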